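/- arXiv:math/0511206 — 3 statements merged into one kernel-verified Lean document; each statement's English description precedes it below -/
import Mathlib

section
/- Let kappa and b be positive integers, set z := (kappa-1)/2 (a rational number), and let x be a nonnegative rational number with z - x an integer; set y := x + b - 1. Assume it is not the case that both x = 0 and kappa = 1. Let E := {-z, -z+1, ..., z} (kappa consecutive values) and B := {x, x+1, ..., y} (b consecutive values). Define P := {(e, f, eps) in E x B x {+1,-1} : e + eps*f = 0} and Z := {(e, f, eps) in E x B x {+1,-1} : e + eps*f = 1}. Then, as integers, |P| - |Z| equals -1 if z = x - 1, equals 1 if z = y, and equals 0 if z is neither x-1 nor y. -/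
open Finset

lemma count_add' (κ b : ℕ) (s : ℤ) :
    (((Finset.range κ) ×ˢ (Finset.range b)).filter
        (fun p => (p.1 : ℤ) + (p.2 : ℤ) = s)).card
      = (min ((κ:ℤ)-1) s + 1 - max 0 (s - (b:ℤ) + 1)).toNat := by
  rw [show (min ((κ:ℤ)-1) s + 1 - max 0 (s - (b:ℤ) + 1)).toNat
      = (Finset.Icc (max 0 (s - (b:ℤ) + 1)) (min ((κ:ℤ)-1) s)).card from (Int.card_Icc _ _).symm]
  refine Finset.card_bij' (fun p _ => (p.1 : ℤ)) (fun m _ => ((m.toNat : ℕ), (s - m).toNat)) ?_ ?_ ?_ ?_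
  · intro p hp
    simp only [mem_filter, mem_product, mem_range] at hp
    simp only [mem_Icc]
    omega
  · intro m hm
    simp only [mem_Icc] at hm
    simp only [mem_filter, mem_product, mem_range]
    omega
  · intro p hp
    simp only [mem_filter, mem_product, mem_range] at hp
    obtain ⟨p1, p2⟩ := p
    simp only [Prod.mk.injEq]
    constructor <;> omega
  · intro m hm
    simp only [mem_Icc] at hm
    show ((m.toNat : ℕ) : ℤ) = m
    omega

lemma count_sub' (κ b : ℕ) (d : ℤ) :
    (((Finset.range κ) ×ˢ (Finset.range b)).filter
        (fun p => (p.1 : ℤ) - (p.2 : ℤ) = d)).card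
      = (min ((κ:ℤ)-1) (d + (b:ℤ) - 1) + 1 - max 0 d).toNat := by
  rw [show (min ((κ:ℤ)-1) (d + (b:ℤ) - 1) + 1 - max 0 d).toNat
      = (Finset.Icc (max 0 d) (min ((κ:ℤ)-1) (d + (b:ℤ) - 1))).card from (Int.card_Icc _ _).symm]
  refine Finset.card_bij' (fun p _ => (p.1 : ℤ)) (fun m _ => ((m.toNat : ℕ), (m - d).toNat)) ?_ ?_ ?_ ?_
  · intro p hp
    simp only [mem_filter, mem_product, mem_range] at hp
    simp only [mem_Icc]
    omega
  · intro m hm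
    simp only [mem_Icc] at hm
    simp only [mem_filter, mem_product, mem_range]
    omega
  · intro p hp
    simp only [mem_filter, mem_product, mem_range] at hp
    obtain ⟨p1, p2⟩ := p
    simp only [Prod.mk.injEq]
    constructor <;> omega
  · intro m hm
    simp only [mem_Icc] at hm
    show ((m.toNat : ℕ) : ℤ) = m
    omega

open Finset

set_option maxHeartbeats 1000000 in
/-- Lemma "plak": for an A-strip with entries `-z, ..., z` (`z = (κ-1)/2`) and a block
with entries `x, x+1, ..., y`, the pole order `|P| - |Z|` of `C_β(κ_p, B)` is `-1` if
`z = x - 1`, `1` if `z = y`, and `0` otherwise. -/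
theorem pole_order_strip_block (κ b : ℕ) (hκ : 0 < κ) (hb : 0 < b)
    (z : ℚ) (hz : z = ((κ : ℚ) - 1) / 2)
    (x : ℚ) (hx : 0 ≤ x) (hzx : ∃ k : ℤ, z - x = (k : ℚ))
    (y : ℚ) (hy : y = x + (b : ℚ) - 1)
    (hnd : ¬(x = 0 ∧ κ = 1)) :
    ((((((Finset.range κ).image (fun j : ℕ => -z + (j : ℚ))) ×ˢ
        ((Finset.range b).image (fun j : ℕ => x + (j : ℚ)))) ×ˢ
          ({1, -1} : Finset ℚ)).filter
        (fun t => t.1.1 + t.2 * t.1.2 = 0)).card : ℤ) -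
      ((((((Finset.range κ).image (fun j : ℕ => -z + (j : ℚ))) ×ˢ
        ((Finset.range b).image (fun j : ℕ => x + (j : ℚ)))) ×ˢ
          ({1, -1} : Finset ℚ)).filter
        (fun t => t.1.1 + t.2 * t.1.2 = 1)).card : ℤ) =
      if z = x - 1 then -1 else if z = y then 1 else 0 := by
  classical
  obtain ⟨k, hk⟩ := hzx
  set E := (Finset.range κ).image (fun j : ℕ => -z + (j : ℚ)) with hE
  set Bf := (Finset.range b).image (fun j : ℕ => x + (j : ℚ)) with hBf
  have step1 : ∀ v : ℚ,
      (((E ×ˢ Bf) ×ˢ ({1, -1} : Finset ℚ)).filter (fun t => t.1.1 + t.2 * t.1.2 = v)).card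
        = ((E ×ˢ Bf).filter (fun p => p.1 + p.2 = v)).card
          + ((E ×ˢ Bf).filter (fun p => p.1 - p.2 = v)).card := by
    intro v
    rw [Finset.card_filter, Finset.card_filter, Finset.card_filter, Finset.sum_product,
      ← Finset.sum_add_distrib]
    refine Finset.sum_congr rfl fun p _ => ?_
    rw [Finset.sum_pair (show (1:ℚ) ≠ -1 by norm_num)]
    simp [sub_eq_add_neg]
  have step2 : ∀ (v : ℚ) (s : ℤ), v + z - x = (s : ℚ) →
      ((E ×ˢ Bf).filter (fun p => p.1 + p.2 = v)).card
        = (((Finset.range κ) ×ˢ (Finset.range b)).filter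
            (fun p => (p.1 : ℤ) + (p.2 : ℤ) = s)).card := by
    intro v s hs
    refine (Finset.card_bij (fun p _ => ((-z + (p.1 : ℚ), x + (p.2 : ℚ)) : ℚ × ℚ)) ?_ ?_ ?_).symm
    · intro p hp
      simp only [mem_filter, mem_product, mem_range] at hp
      simp only [mem_filter, mem_product, hE, hBf, mem_image, mem_range]
      refine ⟨⟨⟨p.1, hp.1.1, rfl⟩, ⟨p.2, hp.1.2, rfl⟩⟩, ?_⟩
      have h2 : ((p.1 : ℚ)) + (p.2 : ℚ) = (s : ℚ) := by exact_mod_cast hp.2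
      linarith
    · intro p hp q hq h
      simp only [Prod.mk.injEq] at h
      have h1 : (p.1 : ℚ) = q.1 := by linarith [h.1]
      have h2 : (p.2 : ℚ) = q.2 := by linarith [h.2]
      obtain ⟨p1, p2⟩ := p
      obtain ⟨q1, q2⟩ := q
      simp only [Prod.mk.injEq]
      exact ⟨by exact_mod_cast h1, by exact_mod_cast h2⟩
    · intro q hq
      simp only [mem_filter, mem_product, hE, hBf, mem_image, mem_range] at hq
      obtain ⟨⟨⟨i, hi, hie⟩, ⟨j, hj, hjf⟩⟩, hsum⟩ := hq
      refine ⟨(i, j), ?_, ?_⟩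
      · simp only [mem_filter, mem_product, mem_range]
        refine ⟨⟨hi, hj⟩, ?_⟩
        have h2 : ((i : ℚ)) + (j : ℚ) = (s : ℚ) := by
          rw [← hie] at hsum
          rw [← hjf] at hsum
          linarith
        exact_mod_cast h2
      · obtain ⟨q1, q2⟩ := q
        simp only [Prod.mk.injEq]
        exact ⟨hie, hjf⟩
  have step3 : ∀ (v : ℚ) (d : ℤ), v + z + x = (d : ℚ) →
      ((E ×ˢ Bf).filter (fun p => p.1 - p.2 = v)).card
        = (((Finset.range κ) ×ˢ (Finset.range b)).filter
            (fun p => (p.1 : ℤ) - (p.2 : ℤ) = d)).card := by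
    intro v d hd
    refine (Finset.card_bij (fun p _ => ((-z + (p.1 : ℚ), x + (p.2 : ℚ)) : ℚ × ℚ)) ?_ ?_ ?_).symm
    · intro p hp
      simp only [mem_filter, mem_product, mem_range] at hp
      simp only [mem_filter, mem_product, hE, hBf, mem_image, mem_range]
      refine ⟨⟨⟨p.1, hp.1.1, rfl⟩, ⟨p.2, hp.1.2, rfl⟩⟩, ?_⟩
      have h2 : ((p.1 : ℚ)) - (p.2 : ℚ) = (d : ℚ) := by exact_mod_cast hp.2
      linarith
    · intro p hp q hq h
      simp only [Prod.mk.injEq] at h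
      have h1 : (p.1 : ℚ) = q.1 := by linarith [h.1]
      have h2 : (p.2 : ℚ) = q.2 := by linarith [h.2]
      obtain ⟨p1, p2⟩ := p
      obtain ⟨q1, q2⟩ := q
      simp only [Prod.mk.injEq]
      exact ⟨by exact_mod_cast h1, by exact_mod_cast h2⟩
    · intro q hq
      simp only [mem_filter, mem_product, hE, hBf, mem_image, mem_range] at hq
      obtain ⟨⟨⟨i, hi, hie⟩, ⟨j, hj, hjf⟩⟩, hsum⟩ := hq
      refine ⟨(i, j), ?_, ?_⟩
      · simp only [mem_filter, mem_product, mem_range]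
        refine ⟨⟨hi, hj⟩, ?_⟩
        have h2 : ((i : ℚ)) - (j : ℚ) = (d : ℚ) := by
          rw [← hie] at hsum
          rw [← hjf] at hsum
          linarith
        exact_mod_cast h2
      · obtain ⟨q1, q2⟩ := q
        simp only [Prod.mk.injEq]
        exact ⟨hie, hjf⟩
  have h2z : z + z = (κ : ℚ) - 1 := by rw [hz]; ring
  have hk0 : (0 : ℚ) + z - x = ((k : ℤ) : ℚ) := by rw [← hk]; ring
  have hk1 : (1 : ℚ) + z - x = ((k + 1 : ℤ) : ℚ) := by push_cast; rw [← hk]; ring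
  have hd0 : (0 : ℚ) + z + x = (((κ : ℤ) - 1 - k : ℤ) : ℚ) := by push_cast; linarith
  have hd1 : (1 : ℚ) + z + x = (((κ : ℤ) - k : ℤ) : ℚ) := by push_cast; linarith
  have hiff1 : (z = x - 1) ↔ (k = -1) := by
    constructor
    · intro h
      have : (k : ℚ) = -1 := by rw [← hk]; linarith
      exact_mod_cast this
    · intro h
      have : (k : ℚ) = -1 := by exact_mod_cast h
      linarith [hk]
  have hiff2 : (z = y) ↔ (k = (b : ℤ) - 1) := by
    constructor
    · intro h
      have : (k : ℚ) = (b : ℚ) - 1 := by rw [← hk]; rw [hy] at h; linarith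
      exact_mod_cast this
    · intro h
      have : (k : ℚ) = (b : ℚ) - 1 := by exact_mod_cast h
      rw [hy]; linarith [hk]
  have hkκ : 2 * k ≤ (κ : ℤ) - 1 := by
    have : (2 * k : ℚ) ≤ (κ : ℚ) - 1 := by linarith [hk]
    exact_mod_cast this
  have hnd' : ¬(2 * k = (κ : ℤ) - 1 ∧ κ = 1) := by
    rintro ⟨h1, h2⟩
    apply hnd
    refine ⟨?_, h2⟩
    have h3 : (2 * k : ℚ) = (κ : ℚ) - 1 := by exact_mod_cast h1
    linarith [hk]
  have hb' : 1 ≤ (b : ℤ) := by exact_mod_cast hb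
  have hκ' : 1 ≤ (κ : ℤ) := by exact_mod_cast hκ
  rw [step1 0, step1 1, step2 0 k hk0, step2 1 (k + 1) hk1,
    step3 0 ((κ : ℤ) - 1 - k) hd0, step3 1 ((κ : ℤ) - k) hd1,
    count_add', count_add', count_sub', count_sub']
  simp only [hiff1, hiff2]
  split_ifs <;> push_cast <;> omega
end

section
/- In the signed permutation setup with pairwise distinct block lengths l_1, ..., l_s, multiplicities r_1, ..., r_s, tail size l, simple root set Pi_L, restricted basis vectors E_1, ..., E_r, and positive system R0plus(J): if J is the empty set (so that R0plus(emptyset) consists, for each batch i, of E_p - E_q, E_p + E_q for blocks p < q in batch i together with E_p for every block p in batch i, i.e. all factors are of type B), then the only signed permutation w of R^n satisfying w(Pi_L) = Pi_L and w(R0plus(emptyset)) = R0plus(emptyset) is the identity. -/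
noncomputable section

open scoped BigOperators RealInnerProductSpace

/-- The `i`-th standard basis vector of `ℝ^n` (zero if `i ≥ n`). -/
def stdBasis (n : ℕ) (i : ℕ) : EuclideanSpace ℝ (Fin n) :=
  if h : i < n then EuclideanSpace.single (⟨i, h⟩ : Fin n) (1 : ℝ) else 0

/-- A signed permutation of `ℝ^n`: a linear isometry sending each standard basis
vector to plus or minus a standard basis vector, according to a permutation. -/
def IsSignedPerm {n : ℕ} (w : EuclideanSpace ℝ (Fin n) ≃ₗᵢ[ℝ] EuclideanSpace ℝ (Fin n)) :
    Prop :=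
  ∃ σ : Equiv.Perm (Fin n), ∀ i : Fin n,
    w (EuclideanSpace.single i (1 : ℝ)) = EuclideanSpace.single (σ i) (1 : ℝ) ∨
    w (EuclideanSpace.single i (1 : ℝ)) = - EuclideanSpace.single (σ i) (1 : ℝ)

/-- The starting coordinate (0-based) of the `p`-th A-block: blocks are consecutive,
block `q` having length `llen (batch q)`. -/
def blockStart {s r : ℕ} (llen : Fin s → ℕ) (batch : Fin r → Fin s) (p : Fin r) : ℕ :=
  ∑ q ∈ Finset.univ.filter (fun q : Fin r => q < p), llen (batch q)

/-- The set `Π_L`: the vectors `e_j - e_{j+1}` for `j, j+1` in the same A-block,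
`e_j - e_{j+1}` for `j, j+1` both in the tail (the last `l` coordinates), and `e_n`
(0-based: `e_{n-1}`) if `l ≥ 1`. -/
def PiL {s r : ℕ} (n l : ℕ) (llen : Fin s → ℕ) (batch : Fin r → Fin s) :
    Set (EuclideanSpace ℝ (Fin n)) :=
  {v | ∃ j : ℕ,
      ((∃ p : Fin r, blockStart llen batch p ≤ j ∧
          j + 1 < blockStart llen batch p + llen (batch p)) ∨
        (n - l ≤ j ∧ j + 1 < n)) ∧
      v = stdBasis n j - stdBasis n (j + 1)} ∪
  {v | 0 < l ∧ v = stdBasis n (n - 1)}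

/-- `E p`: the orthogonal projection of the first standard basis vector of the `p`-th
block onto the orthogonal complement `t^L` of the span of `Π_L`. -/
def Evec {s r : ℕ} (n l : ℕ) (llen : Fin s → ℕ) (batch : Fin r → Fin s) (p : Fin r) :
    EuclideanSpace ℝ (Fin n) :=
  (Submodule.orthogonalProjectionOnto ((Submodule.span ℝ (PiL n l llen batch))ᗮ)
    (stdBasis n (blockStart llen batch p)) : EuclideanSpace ℝ (Fin n))

/-- The positive system `R₀⁺(J)`: for each batch `i`, the vectors `E p - E q` and
`E p + E q` for blocks `p < q` of batch `i`, together with `E p` for every block `p`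
of batch `i` whenever `i ∉ J`. -/
def R0plus {s r : ℕ} (n l : ℕ) (llen : Fin s → ℕ) (batch : Fin r → Fin s)
    (J : Finset (Fin s)) : Set (EuclideanSpace ℝ (Fin n)) :=
  {v | ∃ p q : Fin r, p < q ∧ batch p = batch q ∧
      (v = Evec n l llen batch p - Evec n l llen batch q ∨
       v = Evec n l llen batch p + Evec n l llen batch q)} ∪
  {v | ∃ p : Fin r, batch p ∉ J ∧ v = Evec n l llen batch p}


namespace P55


lemma stdBasis_apply {n : ℕ} (j : ℕ) (k : Fin n) :
    stdBasis n j k = if j = (k : ℕ) then 1 else 0 := by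
  unfold stdBasis
  split_ifs with h h1 h2
  · rw [EuclideanSpace.single_apply, if_pos (Fin.ext h1.symm)]
  · rw [EuclideanSpace.single_apply, if_neg (by simp [Fin.ext_iff]; omega)]
  · exact absurd (h2 ▸ k.2) h
  · rfl

/-- partial sums of block lengths -/
def Bsum {s r : ℕ} (llen : Fin s → ℕ) (batch : Fin r → Fin s) (k : ℕ) : ℕ :=
  ∑ q ∈ Finset.univ.filter (fun q : Fin r => (q : ℕ) < k), llen (batch q)

variable {s r : ℕ} (llen : Fin s → ℕ) (batch : Fin r → Fin s)

lemma blockStart_eq (p : Fin r) : blockStart llen batch p = Bsum llen batch p := rfl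

lemma Bsum_succ {k : ℕ} (hk : k < r) :
    Bsum llen batch (k + 1) = Bsum llen batch k + llen (batch ⟨k, hk⟩) := by
  unfold Bsum
  rw [show (Finset.univ.filter (fun q : Fin r => (q : ℕ) < k + 1)) =
      insert (⟨k, hk⟩ : Fin r) (Finset.univ.filter (fun q : Fin r => (q : ℕ) < k)) by
    ext q; simp [Fin.ext_iff]; omega]
  rw [Finset.sum_insert (by simp)]
  ring

lemma Bsum_succ_ge {k : ℕ} (hk : r ≤ k) :
    Bsum llen batch (k + 1) = Bsum llen batch k := by
  unfold Bsum
  congr 1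
  ext q
  have := q.2
  simp
  omega

lemma Bsum_mono : Monotone (Bsum llen batch) := by
  intro a b hab
  apply Finset.sum_le_sum_of_subset
  intro q; simp; omega

lemma Bsum_top : Bsum llen batch r = ∑ p, llen (batch p) := by
  unfold Bsum
  congr 1
  ext q
  simpa using q.2

lemma blockStart_add_le (p : Fin r) :
    blockStart llen batch p + llen (batch p) ≤ Bsum llen batch r := by
  rw [blockStart_eq]
  have h1 : Bsum llen batch ((p : ℕ) + 1) = Bsum llen batch p + llen (batch p) := by
    rw [Bsum_succ llen batch p.2]
  rw [← h1]
  exact Bsum_mono llen batch p.2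

lemma blockStart_le_of_lt {p q : Fin r} (hpq : p < q) :
    blockStart llen batch p + llen (batch p) ≤ blockStart llen batch q := by
  rw [blockStart_eq, blockStart_eq, ← Bsum_succ llen batch p.2]
  exact Bsum_mono llen batch hpq

lemma cover : ∀ k j, j < Bsum llen batch k →
    ∃ p : Fin r, blockStart llen batch p ≤ j ∧
      j < blockStart llen batch p + llen (batch p) := by
  intro k
  induction k with
  | zero => intro j hj; simp [Bsum] at hj
  | succ k ih =>
    intro j hj
    by_cases hk : k < r
    · by_cases hj2 : j < Bsum llen batch k
      · exact ih j hj2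
      · refine ⟨⟨k, hk⟩, ?_, ?_⟩ <;>
        · have hb : blockStart llen batch (⟨k, hk⟩ : Fin r) = Bsum llen batch k := rfl
          rw [Bsum_succ llen batch hk] at hj
          omega
    · rw [Bsum_succ_ge llen batch (by omega)] at hj
      exact ih j hj

lemma block_disjoint {p q : Fin r} {j : ℕ} (hpq : p ≠ q)
    (h1 : blockStart llen batch p ≤ j) (h2 : j < blockStart llen batch p + llen (batch p))
    (h3 : blockStart llen batch q ≤ j) (h4 : j < blockStart llen batch q + llen (batch q)) :
    False := by
  rcases lt_or_gt_of_ne hpq with h | h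
  · have := blockStart_le_of_lt llen batch h; omega
  · have := blockStart_le_of_lt llen batch h; omega

-- candidate for Evec
def Ecand (n : ℕ) (p : Fin r) : EuclideanSpace ℝ (Fin n) :=
  ((llen (batch p) : ℝ))⁻¹ •
    ∑ j ∈ Finset.Ico (blockStart llen batch p)
      (blockStart llen batch p + llen (batch p)), stdBasis n j

lemma Ecand_apply (n : ℕ) (p : Fin r) (k : Fin n) :
    Ecand llen batch n p k =
      if blockStart llen batch p ≤ (k : ℕ) ∧
          (k : ℕ) < blockStart llen batch p + llen (batch p)
        then ((llen (batch p) : ℝ))⁻¹ else 0 := by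
  unfold Ecand
  rw [PiLp.smul_apply, WithLp.ofLp_sum, Finset.sum_apply]
  simp only [stdBasis_apply]
  rw [Finset.sum_ite_eq' (Finset.Ico _ _) (k : ℕ) (fun _ => (1:ℝ))]
  by_cases h : blockStart llen batch p ≤ (k:ℕ) ∧ (k:ℕ) < blockStart llen batch p + llen (batch p)
  · rw [if_pos (Finset.mem_Ico.mpr h), if_pos h]; simp
  · rw [if_neg (fun hc => h (Finset.mem_Ico.mp hc)), if_neg h]; simp

lemma inner_stdBasis_left {n : ℕ} {j : ℕ} (h : j < n) (x : EuclideanSpace ℝ (Fin n)) :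
    ⟪stdBasis n j, x⟫ = x ⟨j, h⟩ := by
  rw [show stdBasis n j = EuclideanSpace.single (⟨j, h⟩ : Fin n) (1:ℝ) by
    unfold stdBasis; rw [dif_pos h]]
  rw [EuclideanSpace.inner_single_left]
  simp

lemma mem_span_orthogonal_iff {n : ℕ} (S : Set (EuclideanSpace ℝ (Fin n)))
    (x : EuclideanSpace ℝ (Fin n)) :
    x ∈ (Submodule.span ℝ S)ᗮ ↔ ∀ u ∈ S, ⟪u, x⟫ = 0 := by
  rw [Submodule.mem_orthogonal]
  constructor
  · intro h u hu
    exact h u (Submodule.subset_span hu)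
  · intro h u hu
    induction hu using Submodule.span_induction with
    | mem y hy => exact h y hy
    | zero => simp
    | add y z _ _ hy hz => rw [inner_add_left, hy, hz]; ring
    | smul c y _ hy => rw [inner_smul_left, hy]; simp


lemma bs_add_le_n {n l : ℕ} (hn : n = (∑ p, llen (batch p)) + l) (p : Fin r) :
    blockStart llen batch p + llen (batch p) ≤ n - l := by
  have h1 := blockStart_add_le llen batch p
  rw [Bsum_top] at h1
  omega

lemma orth_const {n l : ℕ} (hn : n = (∑ p, llen (batch p)) + l)
    (z : EuclideanSpace ℝ (Fin n))
    (hz : z ∈ (Submodule.span ℝ (PiL n l llen batch))ᗮ) (p : Fin r) :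
    ∀ j (h1 : blockStart llen batch p ≤ j)
      (h2 : j < blockStart llen batch p + llen (batch p)) (hj : j < n)
      (hb : blockStart llen batch p < n),
      z ⟨j, hj⟩ = z ⟨blockStart llen batch p, hb⟩ := by
  have hub := bs_add_le_n llen batch hn p
  rw [mem_span_orthogonal_iff] at hz
  -- induction on offset
  suffices H : ∀ d (h2 : blockStart llen batch p + d <
      blockStart llen batch p + llen (batch p))
      (hj : blockStart llen batch p + d < n) (hb : blockStart llen batch p < n),
      z ⟨blockStart llen batch p + d, hj⟩ = z ⟨blockStart llen batch p, hb⟩ by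
    intro j h1 h2 hj hb
    obtain ⟨d, rfl⟩ : ∃ d, j = blockStart llen batch p + d := ⟨j - blockStart llen batch p, by omega⟩
    exact H d h2 hj hb
  intro d
  induction d with
  | zero => intro h2 hj hb; rfl
  | succ d ih =>
    intro h2 hj hb
    have hd : blockStart llen batch p + d < n := by omega
    have hu : (stdBasis n (blockStart llen batch p + d) -
        stdBasis n (blockStart llen batch p + d + 1)) ∈ PiL n l llen batch := by
      left
      exact ⟨blockStart llen batch p + d, Or.inl ⟨p, by omega, by omega⟩, rfl⟩
    have h0 := hz _ hu
    rw [inner_sub_left, inner_stdBasis_left hd,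
      inner_stdBasis_left (show blockStart llen batch p + d + 1 < n by omega)] at h0
    have : z ⟨blockStart llen batch p + (d+1), hj⟩ = z ⟨blockStart llen batch p + d, hd⟩ := by
      have : blockStart llen batch p + d + 1 = blockStart llen batch p + (d+1) := by omega
      rw [← sub_eq_zero]
      rw [show (⟨blockStart llen batch p + (d+1), hj⟩ : Fin n) =
        ⟨blockStart llen batch p + d + 1, by omega⟩ by simp [Fin.ext_iff]; omega]
      linarith [h0]
    rw [this, ih (by omega) hd hb]

lemma Evec_eq (hlen_pos : ∀ i, 0 < llen i) {n l : ℕ}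
    (hn : n = (∑ p, llen (batch p)) + l) (p : Fin r) :
    Evec n l llen batch p = Ecand llen batch n p := by
  have hub := bs_add_le_n llen batch hn p
  have hpos := hlen_pos (batch p)
  have hbn : blockStart llen batch p < n := by omega
  unfold Evec
  rw [← Submodule.starProjection_apply]
  apply Submodule.eq_starProjection_of_mem_of_inner_eq_zero
  · rw [mem_span_orthogonal_iff]
    rintro u (⟨j, hcond, rfl⟩ | ⟨hl, rfl⟩)
    · have hj1 : j + 1 < n := by
        rcases hcond with ⟨q, hq1, hq2⟩ | ⟨h1, h2⟩
        · have := bs_add_le_n llen batch hn q; omega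
        · omega
      rw [inner_sub_left, inner_stdBasis_left (show j < n by omega),
        inner_stdBasis_left hj1, Ecand_apply, Ecand_apply]
      simp only [Fin.val_mk]
      rcases hcond with ⟨q, hq1, hq2⟩ | ⟨h1, h2⟩
      · by_cases hqp : q = p
        · subst hqp
          rw [if_pos (by omega), if_pos (by omega), sub_self]
        · have hq' := bs_add_le_n llen batch hn q
          rw [if_neg, if_neg, sub_self]
          · rintro ⟨ha, hb⟩
            exact block_disjoint llen batch (Ne.symm hqp) ha hb (by omega) (by omega)
          · rintro ⟨ha, hb⟩
            exact block_disjoint llen batch (Ne.symm hqp) ha hb (by omega) (by omega)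
      · rw [if_neg (by omega), if_neg (by omega), sub_self]
    · rw [inner_stdBasis_left (show n - 1 < n by omega), Ecand_apply]
      simp only [Fin.val_mk]
      rw [if_neg (by omega)]
  · intro z hz
    rw [inner_sub_left, inner_stdBasis_left hbn]
    unfold Ecand
    rw [inner_smul_left, sum_inner]
    have hsum : ∑ j ∈ Finset.Ico (blockStart llen batch p)
        (blockStart llen batch p + llen (batch p)),
        (inner ℝ (stdBasis n j) z : ℝ) =
        ∑ _j ∈ Finset.Ico (blockStart llen batch p)
        (blockStart llen batch p + llen (batch p)), z ⟨blockStart llen batch p, hbn⟩ := by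
      refine Finset.sum_congr rfl (fun j hj => ?_)
      rw [Finset.mem_Ico] at hj
      rw [inner_stdBasis_left (show j < n by omega)]
      exact orth_const llen batch hn z hz p j hj.1 hj.2 (by omega) hbn
    rw [hsum, Finset.sum_const, Nat.card_Ico]
    simp only [nsmul_eq_mul, starRingEnd_apply, star_trivial]
    have h2 : (blockStart llen batch p + llen (batch p) - blockStart llen batch p) =
      llen (batch p) := by omega
    rw [h2]
    have hLp : ((llen (batch p) : ℕ) : ℝ) ≠ 0 := Nat.cast_ne_zero.mpr (by omega)
    field_simp
    ring

lemma sum_indicator {n : ℕ} (a b : ℕ) (hb : b ≤ n) (A : ℝ) :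
    ∑ k : Fin n, (if a ≤ (k : ℕ) ∧ (k : ℕ) < b then A else 0) = (b - a : ℕ) * A := by
  rw [Fin.sum_univ_eq_sum_range (fun i => if a ≤ i ∧ i < b then A else 0) n]
  rw [← Finset.sum_filter]
  rw [show (Finset.range n).filter (fun i => a ≤ i ∧ i < b) = Finset.Ico a b by
    ext i; simp [Finset.mem_Ico]; omega]
  rw [Finset.sum_const, Nat.card_Ico, nsmul_eq_mul]

lemma inner_Ecand_self (hlen_pos : ∀ i, 0 < llen i) {n l : ℕ}
    (hn : n = (∑ p, llen (batch p)) + l) (p : Fin r) :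
    ⟪Ecand llen batch n p, Ecand llen batch n p⟫ = ((llen (batch p) : ℝ))⁻¹ := by
  have hub := bs_add_le_n llen batch hn p
  have hpos := hlen_pos (batch p)
  rw [PiLp.inner_apply]
  simp only [RCLike.inner_apply, starRingEnd_apply, star_trivial, Ecand_apply]
  have hsum : ∑ k : Fin n, ((if blockStart llen batch p ≤ (k : ℕ) ∧
        (k : ℕ) < blockStart llen batch p + llen (batch p)
        then ((llen (batch p) : ℝ))⁻¹ else 0) *
      (if blockStart llen batch p ≤ (k : ℕ) ∧
        (k : ℕ) < blockStart llen batch p + llen (batch p)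
        then ((llen (batch p) : ℝ))⁻¹ else 0)) =
      ∑ k : Fin n, (if blockStart llen batch p ≤ (k : ℕ) ∧
        (k : ℕ) < blockStart llen batch p + llen (batch p)
        then ((llen (batch p) : ℝ))⁻¹ * ((llen (batch p) : ℝ))⁻¹ else 0) := by
    refine Finset.sum_congr rfl (fun k _ => ?_)
    split_ifs <;> ring
  rw [hsum, sum_indicator _ _ (show blockStart llen batch p + llen (batch p) ≤ n by omega)]
  have h2 : (blockStart llen batch p + llen (batch p) - blockStart llen batch p) =
    llen (batch p) := by omega
  rw [h2]
  have hLp : ((llen (batch p) : ℕ) : ℝ) ≠ 0 := Nat.cast_ne_zero.mpr (by omega)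
  field_simp

lemma inner_Ecand_ne {n l : ℕ} (hn : n = (∑ p, llen (batch p)) + l) {p q : Fin r}
    (hpq : p ≠ q) :
    ⟪Ecand llen batch n p, Ecand llen batch n q⟫ = 0 := by
  rw [PiLp.inner_apply]
  simp only [RCLike.inner_apply, starRingEnd_apply, star_trivial, Ecand_apply]
  apply Finset.sum_eq_zero
  intro k _
  split_ifs with h1 h2
  · exact (block_disjoint llen batch hpq h2.1 h2.2 h1.1 h1.2).elim
  · rw [mul_zero]
  · rw [zero_mul]
  · rw [zero_mul]

lemma key1 {n : ℕ} (c : ℝ) (hc : c = 1 ∨ c = -1) (a bb : Fin n) (hab : a ≠ bb) (m : ℕ)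
    (h : c • EuclideanSpace.single a (1:ℝ) - EuclideanSpace.single bb (1:ℝ) =
      stdBasis n m - stdBasis n (m+1)) :
    c = 1 ∧ m = (a : ℕ) ∧ m + 1 = (bb : ℕ) := by
  have hev : ∀ km : Fin n, (c • EuclideanSpace.single a (1:ℝ) -
      EuclideanSpace.single bb (1:ℝ)) km = (stdBasis n m - stdBasis n (m+1)) km :=
    fun km => by rw [h]
  have e1 := hev bb
  rw [PiLp.sub_apply, PiLp.smul_apply, EuclideanSpace.single_apply,
    if_neg (show ¬ bb = a from fun hx => hab hx.symm), EuclideanSpace.single_apply,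
    if_pos rfl, PiLp.sub_apply, stdBasis_apply, stdBasis_apply] at e1
  have hm1 : m + 1 = (bb : ℕ) := by
    split_ifs at e1 with h1 h2
    · exact h2
    · norm_num at e1
    · exact ‹m + 1 = (bb : ℕ)›
    · norm_num at e1
  have e2 := hev a
  rw [PiLp.sub_apply, PiLp.smul_apply, EuclideanSpace.single_apply, if_pos rfl,
    EuclideanSpace.single_apply, if_neg hab, PiLp.sub_apply, stdBasis_apply, stdBasis_apply,
    if_neg (show ¬ m + 1 = (a : ℕ) from fun hx => hab (Fin.ext (by omega)))] at e2
  rcases hc with rfl | rfl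
  · split_ifs at e2 with h1
    · exact ⟨rfl, h1, hm1⟩
    · norm_num at e2
  · split_ifs at e2 with h1 <;> norm_num at e2

lemma key2 {n : ℕ} (c : ℝ) (a bb : Fin n) (hab : a ≠ bb)
    (h : c • EuclideanSpace.single a (1:ℝ) - EuclideanSpace.single bb (1:ℝ) =
      stdBasis n (n-1)) : False := by
  have e1 : (c • EuclideanSpace.single a (1:ℝ) - EuclideanSpace.single bb (1:ℝ)) bb =
      stdBasis n (n-1) bb := by rw [h]
  rw [PiLp.sub_apply, PiLp.smul_apply, EuclideanSpace.single_apply,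
    if_neg (show ¬ bb = a from fun hx => hab hx.symm), EuclideanSpace.single_apply,
    if_pos rfl, stdBasis_apply] at e1
  split_ifs at e1 <;> norm_num at e1

lemma key3 {n : ℕ} (c : ℝ) (a : Fin n) (m : ℕ) (hm1 : m + 1 < n)
    (h : c • EuclideanSpace.single a (1:ℝ) = stdBasis n m - stdBasis n (m+1)) : False := by
  have hev : ∀ km : Fin n, (c • EuclideanSpace.single a (1:ℝ)) km =
      (stdBasis n m - stdBasis n (m+1)) km := fun km => by rw [h]
  have e1 := hev ⟨m, by omega⟩
  have e2 := hev ⟨m+1, hm1⟩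
  simp only [PiLp.smul_apply, PiLp.sub_apply, EuclideanSpace.single_apply,
    stdBasis_apply, Fin.val_mk, smul_eq_mul, if_true] at e1 e2
  rw [if_neg (show ¬ m + 1 = m by omega)] at e1
  rw [if_neg (show ¬ m = m + 1 by omega)] at e2
  split_ifs at e1 e2 with h1 h2
  · rw [mul_one] at e1 e2; linarith
  · norm_num at e2
  · norm_num at e1
  · norm_num at e1

lemma key4 {n : ℕ} (c : ℝ) (hc : c = 1 ∨ c = -1) (a : Fin n)
    (h : c • EuclideanSpace.single a (1:ℝ) = stdBasis n (n-1)) :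
    (a : ℕ) = n - 1 ∧ c = 1 := by
  have e1 : (c • EuclideanSpace.single a (1:ℝ)) a = stdBasis n (n-1) a := by rw [h]
  rw [PiLp.smul_apply, EuclideanSpace.single_apply, if_pos rfl, stdBasis_apply] at e1
  rcases hc with rfl | rfl
  · split_ifs at e1 with h1
    · exact ⟨h1.symm, rfl⟩
    · norm_num at e1
  · split_ifs at e1 with h1 <;> norm_num at e1

end P55
open P55

/-- Proposition 5.5: when `J = ∅` (all factors of `R₀(ξ)` of type `B`), the only
signed permutation `w` with `w(Π_L) = Π_L` and `w(R₀⁺(∅)) = R₀⁺(∅)` is the identity. -/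
theorem R_group_trivial_of_all_type_B
    (s l : ℕ) (llen mult : Fin s → ℕ)
    (hlen_pos : ∀ i, 0 < llen i) (hlen_inj : Function.Injective llen)
    (hmult : ∀ i, 0 < mult i)
    (r : ℕ) (batch : Fin r → Fin s) (hbatch_mono : Monotone batch)
    (hbatch_card : ∀ i, (Finset.univ.filter fun p => batch p = i).card = mult i)
    (n : ℕ) (hn : n = (∑ p, llen (batch p)) + l)
    (w : EuclideanSpace ℝ (Fin n) ≃ₗᵢ[ℝ] EuclideanSpace ℝ (Fin n))
    (hw : IsSignedPerm w)
    (hwPi : w '' PiL n l llen batch = PiL n l llen batch)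
    (hwR : w '' R0plus n l llen batch (∅ : Finset (Fin s)) =
      R0plus n l llen batch (∅ : Finset (Fin s))) :
    w = LinearIsometryEquiv.refl ℝ (EuclideanSpace ℝ (Fin n)) := by
  classical
  obtain ⟨σ, hσ⟩ := hw
  set ε : Fin n → ℝ := fun i =>
    if w (EuclideanSpace.single i (1 : ℝ)) = EuclideanSpace.single (σ i) (1 : ℝ)
    then 1 else -1 with hεdef
  have hε1 : ∀ i, ε i = 1 ∨ ε i = -1 := by
    intro i; rw [hεdef]; dsimp only; split_ifs <;> simp
  have hε : ∀ i, w (EuclideanSpace.single i (1 : ℝ)) =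
      ε i • EuclideanSpace.single (σ i) (1 : ℝ) := by
    intro i
    rw [hεdef]; dsimp only
    split_ifs with hc
    · rw [one_smul]; exact hc
    · rcases hσ i with h | h
      · exact absurd h hc
      · rw [h, neg_smul, one_smul]
  -- basis expansion
  have hexp : ∀ x : EuclideanSpace ℝ (Fin n),
      x = ∑ i, x i • EuclideanSpace.single i (1 : ℝ) := by
    intro x
    ext k
    rw [WithLp.ofLp_sum, Finset.sum_apply]
    simp [EuclideanSpace.single_apply]
  -- coordinates of w x
  have hwcoord : ∀ (x : EuclideanSpace ℝ (Fin n)) (k : Fin n),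
      w x (σ k) = ε k * x k := by
    intro x k
    conv_lhs => rw [hexp x]
    rw [map_sum]
    have h1 : ∀ i : Fin n, w (x i • EuclideanSpace.single i (1:ℝ)) =
        (x i * ε i) • EuclideanSpace.single (σ i) (1:ℝ) := by
      intro i
      rw [map_smul, hε i, smul_smul]
    simp only [h1]
    rw [WithLp.ofLp_sum, Finset.sum_apply]
    rw [Finset.sum_eq_single k]
    · rw [PiLp.smul_apply, EuclideanSpace.single_apply, if_pos rfl]
      simp [smul_eq_mul]; ring
    · intro i _ hik
      rw [PiLp.smul_apply, EuclideanSpace.single_apply,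
        if_neg (fun hc => hik (σ.injective hc.symm))]
      simp
    · intro h; exact absurd (Finset.mem_univ k) h
  -- abbreviations and block facts
  have hEvec : ∀ p, Evec n l llen batch p = Ecand llen batch n p :=
    Evec_eq llen batch hlen_pos hn
  set E := Ecand llen batch n with hEdef
  set b := blockStart llen batch with hbdef
  set L := fun p : Fin r => llen (batch p) with hLdef
  have hLpos : ∀ p, 0 < L p := fun p => hlen_pos (batch p)
  have hbtr : ∀ q : Fin r, blockStart llen batch q = b q := fun q => rfl
  have hLtr : ∀ q : Fin r, llen (batch q) = L q := fun q => rfl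
  have hsumtr : Finset.univ.sum L = ∑ p, llen (batch p) := rfl
  have hLinvpos : ∀ p, (0:ℝ) < ((L p : ℕ) : ℝ)⁻¹ := by
    intro p
    have := hLpos p
    positivity
  have hbub : ∀ p, b p + L p ≤ n - l := fun p => bs_add_le_n llen batch hn p
  have hbn : ∀ p, b p < n := by
    intro p
    have h1 := hbub p
    have h2 := hLpos p
    omega
  have hEapp : ∀ p (k : Fin n), E p k =
      if b p ≤ (k:ℕ) ∧ (k:ℕ) < b p + L p then ((L p : ℕ):ℝ)⁻¹ else 0 :=
    fun p k => Ecand_apply llen batch n p k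
  have hblkeq : ∀ {p q : Fin r} {j : ℕ}, b p ≤ j → j < b p + L p →
      b q ≤ j → j < b q + L q → p = q := by
    intro p q j h1 h2 h3 h4
    by_contra hne
    exact block_disjoint llen batch hne h1 h2 h3 h4
  -- membership in sets transported by w
  have hwPi' : ∀ u ∈ PiL n l llen batch, w u ∈ PiL n l llen batch := by
    intro u hu
    rw [← hwPi]
    exact Set.mem_image_of_mem w hu
  have hwR' : ∀ u ∈ R0plus n l llen batch (∅ : Finset (Fin s)),
      w u ∈ R0plus n l llen batch (∅ : Finset (Fin s)) := by
    intro u hu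
    rw [← hwR]
    exact Set.mem_image_of_mem w hu
  have hRmem : ∀ v : EuclideanSpace ℝ (Fin n),
      v ∈ R0plus n l llen batch (∅ : Finset (Fin s)) ↔
      ((∃ p q : Fin r, p < q ∧ batch p = batch q ∧
        (v = E p - E q ∨ v = E p + E q)) ∨ (∃ p : Fin r, v = E p)) := by
    intro v
    unfold R0plus
    simp only [Set.mem_union, Set.mem_setOf_eq, hEvec, Finset.notMem_empty,
      not_false_iff, true_and]
  -- inner products of E
  have hinner : ∀ p q : Fin r, ⟪E p, E q⟫ = if p = q then ((L p : ℕ):ℝ)⁻¹ else 0 := by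
    intro p q
    by_cases hpq : p = q
    · subst hpq
      rw [if_pos rfl]
      exact inner_Ecand_self llen batch hlen_pos hn p
    · rw [if_neg hpq]
      exact inner_Ecand_ne llen batch hn hpq
  -- E is injective
  have hEinj : Function.Injective E := by
    intro p q hpq
    by_contra hne
    have h1 : E p ⟨b p, hbn p⟩ = E q ⟨b p, hbn p⟩ := by rw [hpq]
    rw [hEapp, hEapp] at h1
    simp only [Fin.val_mk] at h1
    rw [if_pos ⟨le_refl _, by have := hLpos p; omega⟩] at h1
    rw [if_neg] at h1
    · exact absurd h1 (ne_of_gt (hLinvpos p))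
    · rintro ⟨ha, hb⟩
      exact hne (hblkeq (le_refl _) (by have := hLpos p; omega) ha hb)
  -- coordinate of w (E p) at σ ⟨b p⟩
  have hwEcoord : ∀ p : Fin r, w (E p) (σ ⟨b p, hbn p⟩) = ε ⟨b p, hbn p⟩ * ((L p : ℕ):ℝ)⁻¹ := by
    intro p
    rw [hwcoord, hEapp]
    simp only [Fin.val_mk]
    rw [if_pos ⟨le_refl _, by have := hLpos p; omega⟩]
  -- step 1: w maps each E p to some E q with batch q = batch p
  have hτex : ∀ p : Fin r, ∃ q : Fin r, batch q = batch p ∧ w (E p) = E q := by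
    intro p
    have hmem : E p ∈ R0plus n l llen batch (∅ : Finset (Fin s)) :=
      (hRmem (E p)).mpr (Or.inr ⟨p, rfl⟩)
    have hmem2 := (hRmem _).mp (hwR' _ hmem)
    -- value of coordinate of w (E p) at σ ⟨b p⟩ is ± (L p)⁻¹
    rcases hmem2 with ⟨a, c, hac, hbac, hsum⟩ | ⟨q, hq⟩
    · -- the type D/B roots: excluded
      exfalso
      have hLac : L a = L c := congrArg llen hbac
      have hcoord := hwEcoord p
      have hac' : a ≠ c := ne_of_lt hac
      -- coordinate of E a ± E c at σ ⟨b p⟩ is 0 or ± (L a)⁻¹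
      have hval : ∀ km : Fin n, (E a) km - (E c) km = 0 ∨ (E a) km - (E c) km = ((L a:ℕ):ℝ)⁻¹ ∨
          (E a) km - (E c) km = -((L a:ℕ):ℝ)⁻¹ := by
        intro km
        rw [hEapp, hEapp]
        split_ifs with h1 h2 h2
        · exact absurd (hblkeq h1.1 h1.2 h2.1 h2.2) hac'
        · right; left; ring
        · right; right; rw [hLac]; ring
        · left; ring
      have hval2 : ∀ km : Fin n, (E a) km + (E c) km = 0 ∨ (E a) km + (E c) km = ((L a:ℕ):ℝ)⁻¹ := by
        intro km
        rw [hEapp, hEapp]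
        split_ifs with h1 h2 h2
        · exact absurd (hblkeq h1.1 h1.2 h2.1 h2.2) hac'
        · right; ring
        · right; rw [hLac]; ring
        · left; ring
      -- conclude L p = L a
      have hLpa : ((L p:ℕ):ℝ)⁻¹ = ((L a:ℕ):ℝ)⁻¹ := by
        have hpinv := hLinvpos p
        have hai := hLinvpos a
        rcases hε1 ⟨b p, hbn p⟩ with he | he <;> rcases hsum with h | h
        · have h0 : (E a - E c) (σ ⟨b p, hbn p⟩) = ((L p:ℕ):ℝ)⁻¹ := by
            rw [← h, hwEcoord p, he, one_mul]
          rw [PiLp.sub_apply] at h0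
          rcases hval (σ ⟨b p, hbn p⟩) with hv | hv | hv <;> rw [h0] at hv <;> linarith
        · have h0 : (E a + E c) (σ ⟨b p, hbn p⟩) = ((L p:ℕ):ℝ)⁻¹ := by
            rw [← h, hwEcoord p, he, one_mul]
          rw [PiLp.add_apply] at h0
          rcases hval2 (σ ⟨b p, hbn p⟩) with hv | hv <;> rw [h0] at hv <;> linarith
        · have h0 : (E a - E c) (σ ⟨b p, hbn p⟩) = -((L p:ℕ):ℝ)⁻¹ := by
            rw [← h, hwEcoord p, he]; ring
          rw [PiLp.sub_apply] at h0
          rcases hval (σ ⟨b p, hbn p⟩) with hv | hv | hv <;> rw [h0] at hv <;> linarith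
        · have h0 : (E a + E c) (σ ⟨b p, hbn p⟩) = -((L p:ℕ):ℝ)⁻¹ := by
            rw [← h, hwEcoord p, he]; ring
          rw [PiLp.add_apply] at h0
          rcases hval2 (σ ⟨b p, hbn p⟩) with hv | hv <;> rw [h0] at hv <;> linarith
      -- norms give a contradiction
      have hnorm : ⟪w (E p), w (E p)⟫ = ⟪E p, E p⟫ := w.inner_map_map (E p) (E p)
      have hLca : L c = L a := hLac.symm
      rcases hsum with h | h <;> rw [h] at hnorm
      · rw [inner_sub_sub_self] at hnorm
        rw [hinner, hinner, hinner, hinner, hinner] at hnorm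
        simp only [eq_self_iff_true, if_true, if_neg hac', if_neg (Ne.symm hac')] at hnorm
        rw [hLca] at hnorm
        have h3 := hLinvpos a
        rw [hLpa] at hnorm
        linarith
      · rw [inner_add_add_self] at hnorm
        rw [hinner, hinner, hinner, hinner, hinner] at hnorm
        simp only [eq_self_iff_true, if_true, if_neg hac', if_neg (Ne.symm hac')] at hnorm
        rw [hLca] at hnorm
        have h3 := hLinvpos a
        rw [hLpa] at hnorm
        linarith
    · -- w (E p) = E q; get batch q = batch p
      refine ⟨q, ?_, hq⟩
      have hcoord := hwEcoord p
      rw [hq, hEapp] at hcoord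
      have hLeq : L q = L p := by
        rcases hε1 ⟨b p, hbn p⟩ with he | he <;> rw [he] at hcoord
        · rw [one_mul] at hcoord
          split_ifs at hcoord with hcond
          · have h2 : ((L q:ℕ):ℝ) = ((L p:ℕ):ℝ) := inv_injective hcoord
            exact_mod_cast h2
          · exact absurd hcoord.symm (ne_of_gt (hLinvpos p))
        · rw [neg_one_mul] at hcoord
          split_ifs at hcoord with hcond
          · have h1 := hLinvpos p
            have h2 := hLinvpos q
            exfalso; linarith [hcoord]
          · have h1 := hLinvpos p
            exfalso; linarith [hcoord]
      exact hlen_inj hLeq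
  -- define τ
  choose τ hτbatch hτE using hτex
  have hτinj : Function.Injective τ := by
    intro p q hpq
    apply hEinj
    apply w.injective
    rw [hτE p, hτE q, hpq]
  have hτne : ∀ {p q : Fin r}, p ≠ q → τ p ≠ τ q := fun h hc => h (hτinj hc)
  -- order preservation within a batch
  have hτmono : ∀ p q : Fin r, p < q → batch p = batch q → τ p < τ q := by
    intro p q hpq hbpq
    have hne : p ≠ q := ne_of_lt hpq
    have hmem : E p - E q ∈ R0plus n l llen batch (∅ : Finset (Fin s)) :=
      (hRmem _).mpr (Or.inl ⟨p, q, hpq, hbpq, Or.inl rfl⟩)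
    have hw2 : w (E p - E q) = E (τ p) - E (τ q) := by
      rw [map_sub, hτE p, hτE q]
    have hmem2 := (hRmem _).mp (hwR' _ hmem)
    rw [hw2] at hmem2
    have hτpq : τ p ≠ τ q := hτne hne
    -- coordinate of E (τ p) - E (τ q) at b (τ q) is negative
    have hcoordq : (E (τ p) - E (τ q)) ⟨b (τ q), hbn (τ q)⟩ = -((L (τ q):ℕ):ℝ)⁻¹ := by
      rw [PiLp.sub_apply, hEapp, hEapp]
      simp only [Fin.val_mk]
      rw [if_neg, if_pos ⟨le_refl _, by have := hLpos (τ q); omega⟩]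
      · ring
      · rintro ⟨ha, hb⟩
        exact hτpq (hblkeq ha hb (le_refl _) (by have := hLpos (τ q); omega))
    have hcoordp : (E (τ p) - E (τ q)) ⟨b (τ p), hbn (τ p)⟩ = ((L (τ p):ℕ):ℝ)⁻¹ := by
      rw [PiLp.sub_apply, hEapp, hEapp]
      simp only [Fin.val_mk]
      rw [if_pos ⟨le_refl _, by have := hLpos (τ p); omega⟩, if_neg]
      · ring
      · rintro ⟨ha, hb⟩
        exact hτpq (hblkeq (le_refl _) (by have := hLpos (τ p); omega) ha hb)
    rcases hmem2 with ⟨a, c, hac, hbac, h | h⟩ | ⟨x, hx⟩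
    · -- E τp - E τq = E a - E c : must have a = τ p, c = τ q
      have hq : c = τ q := by
        have h1 := hcoordq
        rw [h, PiLp.sub_apply, hEapp, hEapp] at h1
        simp only [Fin.val_mk] at h1
        by_contra hcq
        split_ifs at h1 with h2 h3 h3
        · exact (ne_of_lt hac) (hblkeq h2.1 h2.2 h3.1 h3.2)
        · have := hLinvpos a
          have := hLinvpos (τ q)
          rw [sub_zero] at h1
          linarith
        · rcases h3 with ⟨ha, hb⟩
          exact hcq (hblkeq ha hb (le_refl _) (by have := hLpos (τ q); omega))
        · have := hLinvpos (τ q)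
          rw [sub_zero] at h1
          linarith
      have hp : a = τ p := by
        have h1 := hcoordp
        rw [h, PiLp.sub_apply, hEapp, hEapp] at h1
        simp only [Fin.val_mk] at h1
        by_contra hcp
        split_ifs at h1 with h2 h3 h3
        · exact (ne_of_lt hac) (hblkeq h2.1 h2.2 h3.1 h3.2)
        · rcases h2 with ⟨ha, hb⟩
          exact hcp (hblkeq ha hb (le_refl _) (by have := hLpos (τ p); omega))
        · have := hLinvpos c
          have := hLinvpos (τ p)
          rw [zero_sub] at h1
          linarith
        · have := hLinvpos (τ p)
          rw [sub_zero] at h1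
          linarith
      rw [← hp, ← hq]
      exact hac
    · -- sum case: coordinate at b (τ q) would be nonnegative
      exfalso
      have h1 := hcoordq
      rw [h, PiLp.add_apply, hEapp, hEapp] at h1
      simp only [Fin.val_mk] at h1
      have hq' := hLinvpos (τ q)
      have ha' := hLinvpos a
      have hc' := hLinvpos c
      split_ifs at h1 <;> linarith
    · -- single case: coordinate at b (τ q) would be nonnegative
      exfalso
      have h1 := hcoordq
      rw [hx, hEapp] at h1
      simp only [Fin.val_mk] at h1
      have hq' := hLinvpos (τ q)
      have hx' := hLinvpos x
      split_ifs at h1 <;> linarith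
  -- τ is the identity
  have hτid : ∀ p, τ p = p := by
    have hτsurj : Function.Surjective τ := Finite.injective_iff_surjective.mp hτinj
    suffices H : ∀ k (p : Fin r), (p : ℕ) = k → τ p = p by exact fun p => H p p rfl
    intro k
    induction k using Nat.strong_induction_on with
    | _ k ih =>
      intro p hp
      by_contra hne
      rcases lt_trichotomy (τ p) p with hlt | heq | hgt
      · have hlt' : ((τ p : Fin r) : ℕ) < (p : ℕ) := hlt
        have h1 : τ (τ p) = τ p := ih (τ p) (by omega) (τ p) rfl
        exact hne (hτinj h1)
      · exact hne heq
      · obtain ⟨y, hy⟩ := hτsurj p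
        have hbyp : batch y = batch p := by rw [← hτbatch y, hy]
        rcases lt_trichotomy y p with hylt | hyeq | hygt
        · have hylt' : ((y : Fin r) : ℕ) < (p : ℕ) := hylt
          have h1 : τ y = y := ih y (by omega) y rfl
          rw [h1] at hy
          exact (ne_of_lt hylt) hy
        · rw [hyeq] at hy
          exact hne hy
        · have h1 : τ p < τ y := hτmono p y hygt hbyp.symm
          rw [hy] at h1
          exact absurd hgt (not_lt_of_gt h1)
  have hwE : ∀ p, w (E p) = E p := by
    intro p
    rw [hτE p, hτid p]
  have hst : ∀ (m : ℕ) (hm : m < n),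
      stdBasis n m = EuclideanSpace.single (⟨m, hm⟩ : Fin n) (1:ℝ) := by
    intro m hm; unfold stdBasis; rw [dif_pos hm]
  -- facts from w (E p) = E p : σ maps block p into itself with sign +1
  have hblkσ : ∀ (p : Fin r) (k : Fin n), b p ≤ (k:ℕ) → (k:ℕ) < b p + L p →
      (b p ≤ ((σ k : Fin n) : ℕ) ∧ ((σ k : Fin n) : ℕ) < b p + L p) ∧ ε k = 1 := by
    intro p k h1 h2
    have h0 : w (E p) (σ k) = ε k * E p k := hwcoord (E p) k
    rw [hwE p, hEapp, hEapp] at h0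
    rw [if_pos (show b p ≤ (k:ℕ) ∧ (k:ℕ) < b p + L p from ⟨h1, h2⟩)] at h0
    rcases hε1 k with he | he <;> rw [he] at h0
    · rw [one_mul] at h0
      split_ifs at h0 with hc
      · exact ⟨hc, he⟩
      · exact absurd h0.symm (ne_of_gt (hLinvpos p))
    · rw [neg_one_mul] at h0
      split_ifs at h0 with hc
      · have h3 := hLinvpos p; exfalso; linarith
      · have h3 := hLinvpos p; exfalso; linarith
  -- chain step within a block / within the tail
  have hchain : ∀ (j : ℕ) (hj : j < n) (hj1 : j + 1 < n),
      (stdBasis n j - stdBasis n (j+1)) ∈ PiL n l llen batch →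
      ε ⟨j, hj⟩ = 1 → ε ⟨j+1, hj1⟩ = 1 →
      ((σ ⟨j+1, hj1⟩ : Fin n) : ℕ) = ((σ ⟨j, hj⟩ : Fin n) : ℕ) + 1 := by
    intro j hj hj1 hmem hej hej1
    have hmem2 := hwPi' _ hmem
    have hwu : w (stdBasis n j - stdBasis n (j+1)) =
        (1:ℝ) • EuclideanSpace.single (σ ⟨j, hj⟩) (1:ℝ) -
        EuclideanSpace.single (σ ⟨j+1, hj1⟩) (1:ℝ) := by
      rw [map_sub, hst j hj, hst (j+1) hj1, hε, hε, hej, hej1, one_smul, one_smul]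
    rw [hwu] at hmem2
    have hσne : σ ⟨j, hj⟩ ≠ σ ⟨j+1, hj1⟩ := by
      intro hc
      have h1 := σ.injective hc
      rw [Fin.ext_iff] at h1
      simp only [Fin.val_mk] at h1
      omega
    rcases hmem2 with ⟨m, hcondm, heq⟩ | ⟨hl0, heq⟩
    · have hk := key1 1 (Or.inl rfl) _ _ hσne m heq
      omega
    · exact absurd heq (fun hx => key2 1 _ _ hσne hx)
  -- the permutation fixes each block pointwise, with positive signs
  have hblockfix : ∀ (p : Fin r) (j : ℕ), b p ≤ j → j < b p + L p → ∀ (hj : j < n),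
      σ ⟨j, hj⟩ = ⟨j, hj⟩ ∧ ε ⟨j, hj⟩ = 1 := by
    intro p
    have hLp := hLpos p
    have hbplt : b p < n := hbn p
    have hbpub := hbub p
    have hshift : ∀ t, b p + t < b p + L p → ∀ (h2 : b p + t < n),
        ((σ ⟨b p + t, h2⟩ : Fin n) : ℕ) = ((σ ⟨b p, hbplt⟩ : Fin n) : ℕ) + t := by
      intro t
      induction t with
      | zero =>
        intro h1 h2
        have h5 : (⟨b p + 0, h2⟩ : Fin n) = ⟨b p, hbplt⟩ := rfl
        rw [h5]
        omega
      | succ t iht =>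
        intro h1 h2
        have h3 : b p + t < n := by omega
        have h4 := iht (by omega) h3
        have hεt := (hblkσ p ⟨b p + t, h3⟩ (show b p ≤ b p + t by omega)
          (show b p + t < b p + L p by omega)).2
        have h5 : b p + t + 1 < n := by omega
        have hεt1 := (hblkσ p ⟨b p + t + 1, h5⟩ (show b p ≤ b p + t + 1 by omega)
          (show b p + t + 1 < b p + L p by omega)).2
        have hpil : stdBasis n (b p + t) - stdBasis n (b p + t + 1) ∈ PiL n l llen batch :=
          Or.inl ⟨b p + t, Or.inl ⟨p, by rw [hbtr]; omega,
            by rw [hbtr, hLtr]; omega⟩, rfl⟩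
        have h6 := hchain (b p + t) h3 h5 hpil hεt hεt1
        have hcast : (⟨b p + (t+1), h2⟩ : Fin n) = ⟨b p + t + 1, h5⟩ := rfl
        rw [hcast]
        omega
    have hσbp : ((σ ⟨b p, hbplt⟩ : Fin n) : ℕ) = b p := by
      have h1 := (hblkσ p ⟨b p, hbplt⟩ (show b p ≤ b p by omega)
        (show b p < b p + L p by omega)).1
      have h3 : b p + (L p - 1) < n := by omega
      have h4 := hshift (L p - 1) (by omega) h3
      have h5 := (hblkσ p ⟨b p + (L p - 1), h3⟩ (show b p ≤ b p + (L p - 1) by omega)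
        (show b p + (L p - 1) < b p + L p by omega)).1
      omega
    intro j hj1 hj2 hj
    refine ⟨?_, (hblkσ p ⟨j, hj⟩ hj1 hj2).2⟩
    have hfin : (⟨b p + (j - b p), by omega⟩ : Fin n) = ⟨j, hj⟩ := by
      rw [Fin.ext_iff]; simp only [Fin.val_mk]; omega
    have h4 := hshift (j - b p) (by omega) (by omega)
    rw [hfin] at h4
    rw [Fin.ext_iff]
    simp only [Fin.val_mk]
    omega
  -- the permutation fixes the tail pointwise, with positive signs
  have htail : ∀ (t : ℕ) (j : ℕ) (hj : j < n), n - l ≤ j → n - 1 - j = t →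
      σ ⟨j, hj⟩ = ⟨j, hj⟩ ∧ ε ⟨j, hj⟩ = 1 := by
    intro t
    induction t using Nat.strong_induction_on with
    | _ t ih =>
      intro j hj h1 ht
      have hl0 : 0 < l := by omega
      by_cases hlast : j = n - 1
      · subst hlast
        have hmem : stdBasis n (n-1) ∈ PiL n l llen batch := Or.inr ⟨hl0, rfl⟩
        have hmem2 := hwPi' _ hmem
        rw [hst (n-1) hj, hε] at hmem2
        rcases hmem2 with ⟨m, hcondm, heq⟩ | ⟨_, heq⟩
        · exfalso
          have hm1 : m + 1 < n := by
            rcases hcondm with ⟨q, hq1, hq2⟩ | ⟨ha, hb⟩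
            · have := hbub q; rw [hbtr, hLtr] at hq2; omega
            · exact hb
          exact key3 _ _ m hm1 heq
        · have hk := key4 _ (hε1 _) _ heq
          constructor
          · rw [Fin.ext_iff]
            simp only [Fin.val_mk]
            exact hk.1
          · exact hk.2
      · have hj1 : j + 1 < n := by omega
        have ihj := ih (n - 1 - (j+1)) (by omega) (j+1) hj1 (by omega) rfl
        have hmem : stdBasis n j - stdBasis n (j+1) ∈ PiL n l llen batch :=
          Or.inl ⟨j, Or.inr ⟨by omega, hj1⟩, rfl⟩
        have hmem2 := hwPi' _ hmem
        have hwu : w (stdBasis n j - stdBasis n (j+1)) =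
            ε ⟨j, hj⟩ • EuclideanSpace.single (σ ⟨j, hj⟩) (1:ℝ) -
            EuclideanSpace.single (⟨j+1, hj1⟩ : Fin n) (1:ℝ) := by
          rw [map_sub, hst j hj, hst (j+1) hj1, hε, hε, ihj.1, ihj.2, one_smul]
        rw [hwu] at hmem2
        have hane : σ ⟨j, hj⟩ ≠ (⟨j+1, hj1⟩ : Fin n) := by
          intro hc
          rw [← ihj.1] at hc
          have h2 := σ.injective hc
          rw [Fin.ext_iff] at h2
          simp only [Fin.val_mk] at h2
          omega
        rcases hmem2 with ⟨m, hcondm, heq⟩ | ⟨_, heq⟩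
        · have hk := key1 _ (hε1 _) _ _ hane m heq
          have hσv : ((σ ⟨j, hj⟩ : Fin n) : ℕ) = j := by
            have h2 := hk.2.1
            have h3 := hk.2.2
            simp only [Fin.val_mk] at h3
            omega
          exact ⟨by rw [Fin.ext_iff]; simp only [Fin.val_mk]; exact hσv, hk.1⟩
        · exact absurd heq (fun hx => key2 _ _ _ hane hx)
  -- every basis vector is fixed
  have hfix : ∀ i : Fin n, σ i = i ∧ ε i = 1 := by
    intro i
    by_cases hi : (i : ℕ) < n - l
    · have hnl : n - l = Bsum llen batch r := by
        have := Bsum_top llen batch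
        omega
      obtain ⟨p, hp1, hp2⟩ := cover llen batch r i (by omega)
      exact hblockfix p i hp1 hp2 i.2
    · have h2 := htail (n - 1 - i) i i.2 (by omega) rfl
      have hcast : (⟨(i : ℕ), i.2⟩ : Fin n) = i := rfl
      rw [hcast] at h2
      exact h2
  -- conclude
  refine LinearIsometryEquiv.ext fun x => ?_
  simp only [LinearIsometryEquiv.coe_refl, id_eq]
  conv_lhs => rw [hexp x]
  rw [map_sum]
  have h1 : ∀ i : Fin n, w (x i • EuclideanSpace.single i (1:ℝ)) =
      x i • EuclideanSpace.single i (1:ℝ) := by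
    intro i
    rw [map_smul, hε i, (hfix i).1, (hfix i).2, one_smul]
  rw [Finset.sum_congr rfl (fun i _ => h1 i)]
  exact (hexp x).symm


end
end

section
/- In the signed permutation setup (pairwise distinct block lengths l_1, ..., l_s, multiplicities r_1, ..., r_s, tail size l, simple roots Pi_L, restricted vectors E_1, ..., E_r, subset J of {1, ..., s}, positive system R0plus(J)): every signed permutation w of R^n with w(Pi_L) = Pi_L and w(R0plus(J)) = R0plus(J) satisfies, for every block index p in {1, ..., r}: w(E_p) = E_p or w(E_p) = -E_p; moreover w(E_p) = E_p unless p is the last block of its batch i and i belongs to J. -/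
noncomputable section

open scoped BigOperators

local notation "⟪" x ", " y "⟫" => @inner ℝ _ _ x y

lemma inner_stdBasis (n j k : ℕ) :
    ⟪stdBasis n j, stdBasis n k⟫ = if j = k ∧ j < n then (1:ℝ) else 0 := by
  unfold stdBasis
  by_cases hj : j < n <;> by_cases hk : k < n
  · rw [dif_pos hj, dif_pos hk, EuclideanSpace.inner_single_left,
      EuclideanSpace.single_apply]
    simp only [map_one, one_mul, Fin.mk.injEq]
    by_cases h : j = k
    · simp [h, hj, hk]
    · simp [h, Ne.symm h]
  · rw [dif_pos hj, dif_neg hk, inner_zero_right]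
    have : ¬ (j = k ∧ j < n) := by rintro ⟨rfl, _⟩; exact hk hj
    simp [this]
  · rw [dif_neg hj, inner_zero_left]
    have : ¬ (j = k ∧ j < n) := by rintro ⟨rfl, hlt⟩; exact hj hlt
    simp [this]
  · rw [dif_neg hj, inner_zero_left]
    have : ¬ (j = k ∧ j < n) := by rintro ⟨rfl, hlt⟩; exact hj hlt
    simp [this]

lemma inner_stdBasis_sum (n : ℕ) (T : Finset ℕ) (hT : ∀ j ∈ T, j < n) (k : ℕ) :
    ⟪stdBasis n k, ∑ j ∈ T, stdBasis n j⟫ = if k ∈ T then (1:ℝ) else 0 := by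
  rw [inner_sum]
  rw [Finset.sum_congr rfl (fun j hj => inner_stdBasis n k j)]
  by_cases hk : k ∈ T
  · rw [Finset.sum_eq_single k]
    · simp [hk, hT k hk]
    · intro b hb hbk; simp [Ne.symm hbk]
    · intro h; exact absurd hk h
  · rw [if_neg hk]
    apply Finset.sum_eq_zero
    intro j hj
    have : ¬ (k = j) := fun h => hk (h ▸ hj)
    simp [this]

section BS
variable {s r : ℕ} (llen : Fin s → ℕ) (batch : Fin r → Fin s)

lemma blockStart_add_le {p q : Fin r} (h : p < q) :
    blockStart llen batch p + llen (batch p) ≤ blockStart llen batch q := by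
  unfold blockStart
  have hsub : insert p (Finset.univ.filter (fun q' : Fin r => q' < p)) ⊆
      Finset.univ.filter (fun q' : Fin r => q' < q) := by
    intro x hx
    simp only [Finset.mem_insert, Finset.mem_filter, Finset.mem_univ, true_and] at hx ⊢
    rcases hx with rfl | hx
    · exact h
    · exact hx.trans h
  have hnp : p ∉ Finset.univ.filter (fun q' : Fin r => q' < p) := by simp
  calc blockStart llen batch p + llen (batch p)
      = ∑ x ∈ insert p (Finset.univ.filter (fun q' : Fin r => q' < p)), llen (batch x) := by
        rw [Finset.sum_insert hnp]; unfold blockStart; ring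
    _ ≤ _ := Finset.sum_le_sum_of_subset hsub

lemma blockStart_add_le_total (p : Fin r) :
    blockStart llen batch p + llen (batch p) ≤ ∑ q, llen (batch q) := by
  unfold blockStart
  have hnp : p ∉ Finset.univ.filter (fun q' : Fin r => q' < p) := by simp
  calc blockStart llen batch p + llen (batch p)
      = ∑ x ∈ insert p (Finset.univ.filter (fun q' : Fin r => q' < p)), llen (batch x) := by
        unfold blockStart; rw [Finset.sum_insert hnp]; ring
    _ ≤ _ := Finset.sum_le_sum_of_subset (Finset.subset_univ _)

lemma blockStart_succ (p : Fin r) (h : (p : ℕ) + 1 < r) :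
    blockStart llen batch ⟨(p : ℕ) + 1, h⟩ = blockStart llen batch p + llen (batch p) := by
  unfold blockStart
  have : Finset.univ.filter (fun q' : Fin r => q' < (⟨(p : ℕ) + 1, h⟩ : Fin r)) =
      insert p (Finset.univ.filter (fun q' : Fin r => q' < p)) := by
    ext x
    simp only [Finset.mem_filter, Finset.mem_univ, true_and, Finset.mem_insert]
    constructor
    · intro hx
      rcases eq_or_ne x p with rfl | hne
      · exact Or.inl rfl
      · right
        rw [Fin.lt_def] at hx ⊢
        have hne' : (x : ℕ) ≠ (p : ℕ) := fun hh => hne (Fin.ext hh)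
        simp only [Fin.val_mk] at hx
        omega
    · intro hx
      rcases hx with rfl | hx
      · rw [Fin.lt_def]; simp only [Fin.val_mk]; omega
      · rw [Fin.lt_def] at hx ⊢; simp only [Fin.val_mk]; omega
  rw [this, Finset.sum_insert (by simp)]
  ring

lemma blockStart_cover (hlen_pos : ∀ i, 0 < llen i) {k : ℕ}
    (hk : k < ∑ q, llen (batch q)) :
    ∃ p : Fin r, blockStart llen batch p ≤ k ∧
      k < blockStart llen batch p + llen (batch p) := by
  have hr : 0 < r := by
    by_contra h
    push_neg at h
    interval_cases r
    simp at hk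
  set T := Finset.univ.filter (fun q : Fin r => blockStart llen batch q ≤ k) with hT
  have hT0 : (⟨0, hr⟩ : Fin r) ∈ T := by
    simp only [hT, Finset.mem_filter, Finset.mem_univ, true_and]
    unfold blockStart
    have : Finset.univ.filter (fun q' : Fin r => q' < (⟨0, hr⟩ : Fin r)) = ∅ := by
      ext x; simp [Fin.lt_def]
    rw [this]; simp
  have hTne : T.Nonempty := ⟨_, hT0⟩
  set p := T.max' hTne with hp
  have hpT : p ∈ T := T.max'_mem hTne
  have hple : blockStart llen batch p ≤ k := by
    simpa [hT] using hpT
  refine ⟨p, hple, ?_⟩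
  by_contra hcon
  push_neg at hcon
  by_cases hsucc : (p : ℕ) + 1 < r
  · have : (⟨(p : ℕ) + 1, hsucc⟩ : Fin r) ∈ T := by
      simp only [hT, Finset.mem_filter, Finset.mem_univ, true_and]
      rw [blockStart_succ llen batch p hsucc]
      exact hcon
    have := T.le_max' _ this
    rw [← hp] at this
    rw [Fin.le_def] at this
    simp at this
  · -- p is the last block
    have hlast : ∀ x : Fin r, x ≤ p := by
      intro x
      rw [Fin.le_def]
      have := x.isLt
      omega
    have huniv : Finset.univ = insert p (Finset.univ.filter (fun q' : Fin r => q' < p)) := by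
      ext x
      simp only [Finset.mem_univ, Finset.mem_insert, Finset.mem_filter, true_and, true_iff]
      rcases eq_or_ne x p with rfl | hne
      · exact Or.inl rfl
      · exact Or.inr (lt_of_le_of_ne (hlast x) hne)
    have : ∑ q, llen (batch q) = blockStart llen batch p + llen (batch p) := by
      rw [huniv, Finset.sum_insert (by simp)]
      unfold blockStart; ring
    omega

end BS

section Main
variable {s r : ℕ} (n l : ℕ) (llen : Fin s → ℕ) (batch : Fin r → Fin s)

/-- The index set of the `p`-th block. -/
def blockIco (p : Fin r) : Finset ℕ :=
  Finset.Ico (blockStart llen batch p) (blockStart llen batch p + llen (batch p))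

/-- The average of the basis vectors of the `p`-th block. -/
def avg (p : Fin r) : EuclideanSpace ℝ (Fin n) :=
  (llen (batch p) : ℝ)⁻¹ • ∑ j ∈ blockIco llen batch p, stdBasis n j

variable (hn : n = (∑ p, llen (batch p)) + l)

include hn in
lemma blockIco_lt_n (p : Fin r) : ∀ j ∈ blockIco llen batch p, j < n := by
  intro j hj
  rw [blockIco, Finset.mem_Ico] at hj
  have := blockStart_add_le_total llen batch p
  omega

lemma blockIco_disjoint {p q : Fin r} (hpq : p ≠ q) {j : ℕ}
    (hj : j ∈ blockIco llen batch p) : j ∉ blockIco llen batch q := by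
  intro hjq
  rw [blockIco, Finset.mem_Ico] at hj hjq
  rcases lt_or_gt_of_ne hpq with h | h
  · have := blockStart_add_le llen batch h; omega
  · have := blockStart_add_le llen batch h; omega

lemma mem_span_diff {jdx : ℕ} (p : Fin r)
    (h1 : blockStart llen batch p ≤ jdx)
    (h2 : jdx + 1 < blockStart llen batch p + llen (batch p)) :
    stdBasis n jdx - stdBasis n (jdx + 1) ∈ Submodule.span ℝ (PiL n l llen batch) :=
  Submodule.subset_span (Or.inl ⟨jdx, Or.inl ⟨p, h1, h2⟩, rfl⟩)

lemma mem_span_telescope (p : Fin r) :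
    ∀ b a : ℕ, a ≤ b → blockStart llen batch p ≤ a →
      b < blockStart llen batch p + llen (batch p) →
      stdBasis n a - stdBasis n b ∈ Submodule.span ℝ (PiL n l llen batch) := by
  intro b
  induction b with
  | zero =>
    intro a hab _ _
    interval_cases a
    simp
  | succ b ih =>
    intro a hab ha hb
    rcases Nat.lt_or_ge a (b+1) with h | h
    · have hab' : a ≤ b := by omega
      have hsplit : stdBasis n a - stdBasis n (b+1) =
          (stdBasis n a - stdBasis n b) + (stdBasis n b - stdBasis n (b+1)) := by abel
      rw [hsplit]
      exact Submodule.add_mem _ (ih a hab' ha (by omega))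
        (mem_span_diff n l llen batch p (by omega) hb)
    · have : a = b + 1 := by omega
      subst this
      simp

lemma mem_span_tail :
    ∀ m jdx : ℕ, n - l ≤ jdx → n - jdx ≤ m →
      stdBasis n jdx ∈ Submodule.span ℝ (PiL n l llen batch) := by
  intro m
  induction m with
  | zero =>
    intro jdx _ h2
    have : ¬ jdx < n := by omega
    rw [stdBasis, dif_neg this]
    exact Submodule.zero_mem _
  | succ m ih =>
    intro jdx h1 h2
    by_cases hlt : jdx < n
    · rcases Nat.lt_or_ge (jdx + 1) n with hlt1 | hge1
      · have hsplit : stdBasis n jdx =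
            (stdBasis n jdx - stdBasis n (jdx + 1)) + stdBasis n (jdx + 1) := by abel
        rw [hsplit]
        refine Submodule.add_mem _ ?_ (ih (jdx+1) (by omega) (by omega))
        exact Submodule.subset_span (Or.inl ⟨jdx, Or.inr ⟨h1, hlt1⟩, rfl⟩)
      · have hj : jdx = n - 1 := by omega
        have hl : 0 < l := by omega
        subst hj
        exact Submodule.subset_span (Or.inr ⟨hl, rfl⟩)
    · rw [stdBasis, dif_neg hlt]
      exact Submodule.zero_mem _

include hn in
lemma inner_std_avg (k : ℕ) (p : Fin r) :
    ⟪stdBasis n k, avg n llen batch p⟫ =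
      (llen (batch p) : ℝ)⁻¹ * (if k ∈ blockIco llen batch p then 1 else 0) := by
  rw [avg, inner_smul_right,
    inner_stdBasis_sum n _ (blockIco_lt_n n l llen batch hn p) k]

include hn in
lemma avg_mem_orthogonal (p : Fin r) :
    avg n llen batch p ∈ (Submodule.span ℝ (PiL n l llen batch))ᗮ := by
  rw [Submodule.mem_orthogonal]
  intro u hu
  induction hu using Submodule.span_induction with
  | zero => simp
  | add x y _ _ hx hy => rw [inner_add_left, hx, hy]; ring
  | smul c x _ hx => rw [real_inner_smul_left, hx]; ring
  | mem x hx =>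
    rcases hx with ⟨j, hj, rfl⟩ | ⟨hl, rfl⟩
    · rw [inner_sub_left, inner_std_avg n l llen batch hn,
        inner_std_avg n l llen batch hn]
      rcases hj with ⟨q, hq1, hq2⟩ | ⟨ht1, ht2⟩
      · rcases eq_or_ne q p with rfl | hne
        · have h1 : j ∈ blockIco llen batch q := by rw [blockIco, Finset.mem_Ico]; omega
          have h2 : j + 1 ∈ blockIco llen batch q := by rw [blockIco, Finset.mem_Ico]; omega
          rw [if_pos h1, if_pos h2]; ring
        · have h1 : j ∈ blockIco llen batch q := by rw [blockIco, Finset.mem_Ico]; omega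
          have h2 : j + 1 ∈ blockIco llen batch q := by rw [blockIco, Finset.mem_Ico]; omega
          rw [if_neg (blockIco_disjoint llen batch hne h1),
            if_neg (blockIco_disjoint llen batch hne h2)]
          ring
      · have htot := blockStart_add_le_total llen batch p
        have h1 : j ∉ blockIco llen batch p := by rw [blockIco, Finset.mem_Ico]; omega
        have h2 : j + 1 ∉ blockIco llen batch p := by rw [blockIco, Finset.mem_Ico]; omega
        rw [if_neg h1, if_neg h2]; ring
    · rw [inner_std_avg n l llen batch hn]
      have htot := blockStart_add_le_total llen batch p
      have h1 : n - 1 ∉ blockIco llen batch p := by rw [blockIco, Finset.mem_Ico]; omega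
      rw [if_neg h1]; ring

lemma sub_avg_mem_span (p : Fin r) {j : ℕ} (hj : j ∈ blockIco llen batch p) :
    stdBasis n j - avg n llen batch p ∈ Submodule.span ℝ (PiL n l llen batch) := by
  have hLpos : 0 < llen (batch p) := by
    rw [blockIco, Finset.mem_Ico] at hj; omega
  have hL : ((llen (batch p) : ℝ)) ≠ 0 := by exact_mod_cast hLpos.ne'
  have hcard : (blockIco llen batch p).card = llen (batch p) := by
    rw [blockIco, Nat.card_Ico]; omega
  have key : stdBasis n j - avg n llen batch p =
      (llen (batch p) : ℝ)⁻¹ •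
        ∑ k ∈ blockIco llen batch p, (stdBasis n j - stdBasis n k) := by
    rw [Finset.sum_sub_distrib, Finset.sum_const, hcard, smul_sub, ← avg]
    congr 1
    rw [← Nat.cast_smul_eq_nsmul ℝ, smul_smul, inv_mul_cancel₀ hL, one_smul]
  rw [key]
  refine Submodule.smul_mem _ _ (Submodule.sum_mem _ ?_)
  intro k hk
  rw [blockIco, Finset.mem_Ico] at hj hk
  rcases le_or_gt j k with h | h
  · exact mem_span_telescope n l llen batch p k j h (by omega) (by omega)
  · have : stdBasis n j - stdBasis n k = -(stdBasis n k - stdBasis n j) := by abel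
    rw [this]
    exact Submodule.neg_mem _
      (mem_span_telescope n l llen batch p j k (le_of_lt h) (by omega) (by omega))

include hn in
lemma proj_block (q : Fin r) {k : ℕ} (hk : k ∈ blockIco llen batch q) :
    (Submodule.orthogonalProjectionOnto ((Submodule.span ℝ (PiL n l llen batch))ᗮ)
        (stdBasis n k) : EuclideanSpace ℝ (Fin n)) = avg n llen batch q := by
  refine Submodule.eq_starProjection_of_mem_orthogonal'
    (avg_mem_orthogonal n l llen batch hn q)
    (Submodule.le_orthogonal_orthogonal _ (sub_avg_mem_span n l llen batch q hk))
    (by abel)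

include hn in
lemma proj_tail {k : ℕ} (hk : n - l ≤ k) :
    (Submodule.orthogonalProjectionOnto ((Submodule.span ℝ (PiL n l llen batch))ᗮ)
        (stdBasis n k) : EuclideanSpace ℝ (Fin n)) = 0 := by
  refine Submodule.eq_starProjection_of_mem_orthogonal'
    (Submodule.zero_mem _)
    (Submodule.le_orthogonal_orthogonal _ (mem_span_tail n l llen batch n k hk (by omega)))
    (by abel)

include hn in
lemma Evec_eq_avg (hlen_pos : ∀ i, 0 < llen i) (p : Fin r) :
    Evec n l llen batch p = avg n llen batch p := by
  rw [Evec]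
  exact proj_block n l llen batch hn p
    (by rw [blockIco, Finset.mem_Ico]; exact ⟨le_refl _, by have := hlen_pos (batch p); omega⟩)

include hn in
lemma inner_avg_avg (hlen_pos : ∀ i, 0 < llen i) (p q : Fin r) :
    ⟪avg n llen batch p, avg n llen batch q⟫ =
      if p = q then (llen (batch p) : ℝ)⁻¹ else 0 := by
  rw [avg, real_inner_smul_left, sum_inner]
  have : ∀ j ∈ blockIco llen batch p,
      ⟪stdBasis n j, avg n llen batch q⟫ =
        (llen (batch q) : ℝ)⁻¹ * (if j ∈ blockIco llen batch q then 1 else 0) :=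
    fun j _ => inner_std_avg n l llen batch hn j q
  rw [Finset.sum_congr rfl this]
  rcases eq_or_ne p q with rfl | hne
  · have hcard : (blockIco llen batch p).card = llen (batch p) := by
      rw [blockIco, Nat.card_Ico]; omega
    have hL : ((llen (batch p) : ℝ)) ≠ 0 := by
      have := hlen_pos (batch p); positivity
    rw [if_pos rfl]
    rw [Finset.sum_congr rfl (fun j hj => by rw [if_pos hj])]
    rw [Finset.sum_const, hcard, nsmul_eq_mul]
    field_simp
  · rw [if_neg hne]
    rw [Finset.sum_congr rfl (fun j hj => by
      rw [if_neg (blockIco_disjoint llen batch hne hj)])]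
    simp

end Main
section Iso
variable {V : Type*} [NormedAddCommGroup V] [InnerProductSpace ℝ V]

lemma map_mem_orthogonal_of_invariant (w : V ≃ₗᵢ[ℝ] V) (K : Submodule ℝ V)
    (hsymm : ∀ x ∈ K, w.symm x ∈ K) : ∀ x ∈ Kᗮ, w x ∈ Kᗮ := by
  intro x hx
  rw [Submodule.mem_orthogonal] at hx ⊢
  intro u hu
  have : ⟪u, w x⟫ = ⟪w.symm u, x⟫ := by
    rw [← w.inner_map_map (w.symm u) x, w.apply_symm_apply]
  rw [this]
  exact hx _ (hsymm u hu)

end Iso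

section Classify
variable {V : Type*} [NormedAddCommGroup V] [InnerProductSpace ℝ V]
  {ι : Type*} [DecidableEq ι] {E : ι → V} {L : ι → ℝ}

lemma classA (hL : ∀ a, 0 < L a) (hIP : ∀ a b, ⟪E a, E b⟫ = if a = b then L a else 0)
    {a c : ι} {ε : ℝ} (hε : ε = 1 ∨ ε = -1) (h : ε • E a = E c) :
    a = c ∧ ε = 1 := by
  clear hε
  have h1 := congrArg (fun v => ⟪v, E c⟫) h
  simp only [real_inner_smul_left, hIP] at h1
  rw [if_true] at h1
  by_cases hac : a = c
  · subst hac
    rw [if_pos rfl] at h1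
    exact ⟨rfl, mul_right_cancel₀ (hL a).ne' (h1.trans (one_mul _).symm)⟩
  · rw [if_neg hac, mul_zero] at h1
    exact absurd h1.symm (hL c).ne'

lemma classB (hL : ∀ a, 0 < L a) (hIP : ∀ a b, ⟪E a, E b⟫ = if a = b then L a else 0)
    {a c d : ι} {ε δ : ℝ} (hε : ε = 1 ∨ ε = -1) (hδ : δ = 1 ∨ δ = -1)
    (hcd : c ≠ d) (h : ε • E a = E c + δ • E d) : False := by
  clear hε
  have h1 := congrArg (fun v => ⟪v, E c⟫) h
  have h2 := congrArg (fun v => ⟪v, E d⟫) h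
  simp only [real_inner_smul_left, inner_add_left, hIP] at h1 h2
  rw [if_true, if_neg (fun hh : d = c => hcd hh.symm), mul_zero, add_zero] at h1
  rw [if_true, if_neg hcd] at h2
  by_cases hac : a = c
  · subst hac
    rw [if_neg hcd, mul_zero, zero_add] at h2
    have := hL d
    rcases hδ with rfl | rfl <;> nlinarith [h2]
  · rw [if_neg hac, mul_zero] at h1
    exact absurd h1.symm (hL c).ne'

lemma classD (hL : ∀ a, 0 < L a) (hIP : ∀ a b, ⟪E a, E b⟫ = if a = b then L a else 0)
    {a b c : ι} {ε1 ε2 : ℝ} (hε1 : ε1 = 1 ∨ ε1 = -1) (hε2 : ε2 = 1 ∨ ε2 = -1)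
    (hab : a ≠ b) (h : ε1 • E a + ε2 • E b = E c) : False := by
  have h1 := congrArg (fun v => ⟪v, E a⟫) h
  have h2 := congrArg (fun v => ⟪v, E b⟫) h
  simp only [real_inner_smul_left, inner_add_left, hIP] at h1 h2
  rw [if_true, if_neg (fun hh : b = a => hab hh.symm), mul_zero, add_zero] at h1
  rw [if_true, if_neg hab, mul_zero, zero_add] at h2
  -- h1 : ε1 * L a = ite (c = a) (L c) 0
  -- h2 : ε2 * L b = ite (c = b) (L c) 0
  by_cases hca : c = a
  · subst hca
    rw [if_neg (fun hh : c = b => hab hh)] at h2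
    have := hL b
    rcases hε2 with rfl | rfl <;> nlinarith [h2]
  · rw [if_neg hca] at h1
    have := hL a
    rcases hε1 with rfl | rfl <;> nlinarith [h1]

lemma classC (hL : ∀ a, 0 < L a) (hIP : ∀ a b, ⟪E a, E b⟫ = if a = b then L a else 0)
    {a b c d : ι} {ε1 ε2 δ : ℝ} (hε1 : ε1 = 1 ∨ ε1 = -1) (hε2 : ε2 = 1 ∨ ε2 = -1)
    (hδ : δ = 1 ∨ δ = -1) (hab : a ≠ b) (hcd : c ≠ d)
    (h : ε1 • E a + ε2 • E b = E c + δ • E d) :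
    (a = c ∧ b = d ∧ ε1 = 1 ∧ ε2 = δ) ∨ (b = c ∧ a = d ∧ ε2 = 1 ∧ ε1 = δ) := by
  clear hε1 hε2
  have h1 := congrArg (fun v => ⟪v, E c⟫) h
  have h2 := congrArg (fun v => ⟪v, E d⟫) h
  simp only [real_inner_smul_left, inner_add_left, hIP] at h1 h2
  rw [if_true, if_neg (fun hh : d = c => hcd hh.symm), mul_zero, add_zero] at h1
  rw [if_true, if_neg hcd, zero_add] at h2
  -- h1 : ε1 * ite (a = c) (L a) 0 + ε2 * ite (b = c) (L b) 0 = L c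
  -- h2 : ε1 * ite (a = d) (L a) 0 + ε2 * ite (b = d) (L b) 0 = δ * L d
  by_cases hac : a = c
  · subst hac
    rw [if_pos rfl, if_neg (fun hh : b = a => hab hh.symm), mul_zero, add_zero] at h1
    have hε1' : ε1 = 1 := mul_right_cancel₀ (hL a).ne' (h1.trans (one_mul _).symm)
    rw [if_neg (fun hh : a = d => hcd hh), mul_zero, zero_add] at h2
    by_cases hbd : b = d
    · subst hbd
      rw [if_pos rfl] at h2
      left
      exact ⟨rfl, rfl, hε1', mul_right_cancel₀ (hL b).ne' h2⟩
    · rw [if_neg hbd, mul_zero] at h2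
      exfalso
      have := hL d
      rcases hδ with rfl | rfl <;> nlinarith [h2]
  · rw [if_neg hac, mul_zero, zero_add] at h1
    by_cases hbc : b = c
    · subst hbc
      rw [if_pos rfl] at h1
      have hε2' : ε2 = 1 := mul_right_cancel₀ (hL b).ne' (h1.trans (one_mul _).symm)
      rw [if_neg (fun hh : b = d => hcd hh), mul_zero, add_zero] at h2
      by_cases had : a = d
      · subst had
        rw [if_pos rfl] at h2
        right
        exact ⟨rfl, rfl, hε2', mul_right_cancel₀ (hL a).ne' h2⟩
      · rw [if_neg had, mul_zero] at h2
        exfalso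
        have := hL d
        rcases hδ with rfl | rfl <;> nlinarith [h2]
    · rw [if_neg hbc, mul_zero] at h1
      exact absurd h1.symm (hL c).ne'

end Classify
/-- Lemma 5.7 together with the analysis in Theorem 5.6: any signed permutation `w`
with `w(Π_L) = Π_L` and `w(R₀⁺(J)) = R₀⁺(J)` satisfies `w(E_p) = ±E_p` for every
block `p`; moreover `w(E_p) = E_p` unless `p` is the last block of its batch and the
batch belongs to `J`. -/
theorem R_group_elements_fix_or_flip_Evec
    (s l : ℕ) (llen mult : Fin s → ℕ)
    (hlen_pos : ∀ i, 0 < llen i) (hlen_inj : Function.Injective llen)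
    (hmult : ∀ i, 0 < mult i)
    (r : ℕ) (batch : Fin r → Fin s) (hbatch_mono : Monotone batch)
    (hbatch_card : ∀ i, (Finset.univ.filter fun p => batch p = i).card = mult i)
    (n : ℕ) (hn : n = (∑ p, llen (batch p)) + l)
    (J : Finset (Fin s))
    (w : EuclideanSpace ℝ (Fin n) ≃ₗᵢ[ℝ] EuclideanSpace ℝ (Fin n))
    (hw : IsSignedPerm w)
    (hwPi : w '' PiL n l llen batch = PiL n l llen batch)
    (hwR : w '' R0plus n l llen batch J = R0plus n l llen batch J)
    (p : Fin r) :
    (w (Evec n l llen batch p) = Evec n l llen batch p ∨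
      w (Evec n l llen batch p) = - Evec n l llen batch p) ∧
    (¬ ((∀ q : Fin r, batch q = batch p → q ≤ p) ∧ batch p ∈ J) →
      w (Evec n l llen batch p) = Evec n l llen batch p) := by
  
  classical
  obtain ⟨σ, hσ⟩ := hw
  -- Notation
  set Av : Fin r → EuclideanSpace ℝ (Fin n) := avg n llen batch with hAv
  have hEavg : ∀ t : Fin r, Evec n l llen batch t = Av t :=
    fun t => Evec_eq_avg n l llen batch hn hlen_pos t
  have hLpos : ∀ t : Fin r, (0:ℝ) < ((llen (batch t) : ℝ))⁻¹ := by
    intro t; have := hlen_pos (batch t); positivity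
  have hIP : ∀ a b : Fin r, ⟪Av a, Av b⟫ = if a = b then ((llen (batch a):ℝ))⁻¹ else 0 :=
    fun a b => inner_avg_avg n l llen batch hn hlen_pos a b
  -- invariance of the span of Π_L
  have hwK : ∀ x ∈ Submodule.span ℝ (PiL n l llen batch),
      w x ∈ Submodule.span ℝ (PiL n l llen batch) := by
    intro x hx
    induction hx using Submodule.span_induction with
    | mem y hy => exact Submodule.subset_span (hwPi ▸ Set.mem_image_of_mem w hy)
    | zero => rw [map_zero]; exact Submodule.zero_mem _
    | add a b _ _ ha hb => rw [map_add]; exact Submodule.add_mem _ ha hb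
    | smul c a _ ha => rw [map_smul]; exact Submodule.smul_mem _ _ ha
  have hwPi' : w.symm '' PiL n l llen batch = PiL n l llen batch := by
    conv_lhs => rw [← hwPi]
    rw [← Set.image_comp]
    have hcomp : (⇑w.symm ∘ ⇑w) = id := funext (fun y => w.symm_apply_apply y)
    rw [hcomp, Set.image_id]
  have hwK' : ∀ x ∈ Submodule.span ℝ (PiL n l llen batch),
      w.symm x ∈ Submodule.span ℝ (PiL n l llen batch) := by
    intro x hx
    induction hx using Submodule.span_induction with
    | mem y hy => exact Submodule.subset_span (hwPi' ▸ Set.mem_image_of_mem w.symm hy)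
    | zero => rw [map_zero]; exact Submodule.zero_mem _
    | add a b _ _ ha hb => rw [map_add]; exact Submodule.add_mem _ ha hb
    | smul c a _ ha => rw [map_smul]; exact Submodule.smul_mem _ _ ha
  have hOw : ∀ x ∈ (Submodule.span ℝ (PiL n l llen batch))ᗮ,
      w x ∈ (Submodule.span ℝ (PiL n l llen batch))ᗮ :=
    map_mem_orthogonal_of_invariant w _ hwK'
  have hOw' : ∀ x ∈ (Submodule.span ℝ (PiL n l llen batch))ᗮ,
      w.symm x ∈ (Submodule.span ℝ (PiL n l llen batch))ᗮ :=
    map_mem_orthogonal_of_invariant w.symm _ (by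
      intro x hx
      have := hwK x hx
      simpa using this)
  have hOOw : ∀ x ∈ ((Submodule.span ℝ (PiL n l llen batch))ᗮ)ᗮ,
      w x ∈ ((Submodule.span ℝ (PiL n l llen batch))ᗮ)ᗮ :=
    map_mem_orthogonal_of_invariant w _ hOw'
  -- w commutes with the projection onto the orthogonal complement
  have hproj : ∀ x : EuclideanSpace ℝ (Fin n),
      ((Submodule.orthogonalProjectionOnto ((Submodule.span ℝ (PiL n l llen batch))ᗮ) (w x)) :
        EuclideanSpace ℝ (Fin n)) =
      w ((Submodule.orthogonalProjectionOnto ((Submodule.span ℝ (PiL n l llen batch))ᗮ) x) :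
        EuclideanSpace ℝ (Fin n)) := by
    intro x
    refine Submodule.eq_starProjection_of_mem_orthogonal'
      (hOw _ (Submodule.orthogonalProjectionOnto _ x).2)
      (hOOw _ (Submodule.sub_starProjection_mem_orthogonal
        (K := (Submodule.span ℝ (PiL n l llen batch))ᗮ) x)) ?_
    rw [← map_add]
    congr 1
    rw [Submodule.starProjection_apply]
    abel
  -- the key step: w sends each E_p to ± an average of a block in the same batch
  have hstep : ∀ t : Fin r, ∃ (q : Fin r) (ε : ℝ), (ε = 1 ∨ ε = -1) ∧ batch q = batch t ∧
      w (Evec n l llen batch t) = ε • Av q := by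
    intro t
    have hsp : blockStart llen batch t ∈ blockIco llen batch t := by
      rw [blockIco, Finset.mem_Ico]
      exact ⟨le_refl _, by have := hlen_pos (batch t); omega⟩
    have hlt : blockStart llen batch t < n := blockIco_lt_n n l llen batch hn t _ hsp
    set i : Fin n := ⟨blockStart llen batch t, hlt⟩ with hi
    have hstd : stdBasis n (blockStart llen batch t) = EuclideanSpace.single i (1:ℝ) := by
      rw [stdBasis, dif_pos hlt]
    have hσi : ((σ i : Fin n) : ℕ) < n := (σ i).isLt
    have hstd2 : EuclideanSpace.single (σ i) (1:ℝ) = stdBasis n ((σ i : Fin n) : ℕ) := by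
      rw [stdBasis, dif_pos hσi]
    obtain ⟨ε, hε, hwx⟩ : ∃ ε : ℝ, (ε = 1 ∨ ε = -1) ∧
        w (stdBasis n (blockStart llen batch t)) = ε • stdBasis n ((σ i : Fin n) : ℕ) := by
      rcases hσ i with hc | hc
      · exact ⟨1, Or.inl rfl, by rw [hstd, hc, hstd2, one_smul]⟩
      · exact ⟨-1, Or.inr rfl, by rw [hstd, hc, hstd2, neg_smul, one_smul]⟩
    have hwEt : w (Evec n l llen batch t) = ε •
        ((Submodule.orthogonalProjectionOnto ((Submodule.span ℝ (PiL n l llen batch))ᗮ)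
          (stdBasis n ((σ i : Fin n) : ℕ))) : EuclideanSpace ℝ (Fin n)) := by
      have h1 : w (Evec n l llen batch t) =
          ((Submodule.orthogonalProjectionOnto ((Submodule.span ℝ (PiL n l llen batch))ᗮ)
            (w (stdBasis n (blockStart llen batch t)))) : EuclideanSpace ℝ (Fin n)) :=
        (hproj _).symm
      rw [h1, hwx, map_smul]
      rfl
    rcases lt_or_ge ((σ i : Fin n) : ℕ) (n - l) with hpos | hpos
    · obtain ⟨q, hq1, hq2⟩ := blockStart_cover llen batch hlen_pos
        (show ((σ i : Fin n) : ℕ) < ∑ q, llen (batch q) by omega)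
      have hmem : ((σ i : Fin n) : ℕ) ∈ blockIco llen batch q := by
        rw [blockIco, Finset.mem_Ico]; exact ⟨hq1, hq2⟩
      have hEq : w (Evec n l llen batch t) = ε • Av q := by
        rw [hwEt, proj_block n l llen batch hn q hmem]
      refine ⟨q, ε, hε, ?_, hEq⟩
      -- norms force the batches to be equal
      have hnorm : ⟪w (Evec n l llen batch t), w (Evec n l llen batch t)⟫ =
          ⟪Evec n l llen batch t, Evec n l llen batch t⟫ := w.inner_map_map _ _
      rw [hEq, hEavg, real_inner_smul_left, real_inner_smul_right, hIP, hIP,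
        if_pos rfl, if_pos rfl] at hnorm
      have hsq : ε * ε = 1 := by rcases hε with rfl | rfl <;> norm_num
      have hinv : ((llen (batch q):ℝ))⁻¹ = ((llen (batch t):ℝ))⁻¹ := by
        rw [← mul_assoc, hsq, one_mul] at hnorm
        exact hnorm
      have : (llen (batch q) : ℝ) = (llen (batch t) : ℝ) := inv_injective hinv
      exact hlen_inj (by exact_mod_cast this)
    · exfalso
      have hzero : w (Evec n l llen batch t) = 0 := by
        rw [hwEt, proj_tail n l llen batch hn (by omega), smul_zero]
      have hip0 : ⟪Evec n l llen batch t, Evec n l llen batch t⟫ = (0:ℝ) := by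
        rw [← w.inner_map_map (Evec n l llen batch t), hzero, inner_zero_right]
      rw [hEavg, hIP, if_pos rfl] at hip0
      exact (hLpos t).ne' hip0
  choose π ε hε hbatchπ hwEv using hstep
  -- injectivity of π
  have hπinj : Function.Injective π := by
    intro a b hab
    by_contra hne
    have h0 : ⟪Evec n l llen batch a, Evec n l llen batch b⟫ = (0:ℝ) := by
      rw [hEavg, hEavg, hIP, if_neg hne]
    have h1 : ⟪w (Evec n l llen batch a), w (Evec n l llen batch b)⟫ = (0:ℝ) := by
      rw [w.inner_map_map]; exact h0
    rw [hwEv, hwEv, hab, real_inner_smul_left, real_inner_smul_right, hIP,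
      if_pos rfl] at h1
    have := hLpos (π b)
    rcases hε a with h2 | h2 <;> rcases hε b with h3 | h3 <;> rw [h2, h3] at h1 <;> nlinarith
  -- the order/sign constraints within a batch
  have hkey : ∀ a b : Fin r, a < b → batch a = batch b → π a < π b ∧ ε a = 1 := by
    intro a b hab hbatch
    have hπab : π a ≠ π b := fun h => (ne_of_lt hab) (hπinj h)
    have hm1 : (Evec n l llen batch a - Evec n l llen batch b) ∈ R0plus n l llen batch J :=
      Or.inl ⟨a, b, hab, hbatch, Or.inl rfl⟩
    have hm2 : (Evec n l llen batch a + Evec n l llen batch b) ∈ R0plus n l llen batch J :=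
      Or.inl ⟨a, b, hab, hbatch, Or.inr rfl⟩
    have hw1 : w (Evec n l llen batch a - Evec n l llen batch b) ∈ R0plus n l llen batch J := by
      rw [← hwR]; exact Set.mem_image_of_mem _ hm1
    have hw2 : w (Evec n l llen batch a + Evec n l llen batch b) ∈ R0plus n l llen batch J := by
      rw [← hwR]; exact Set.mem_image_of_mem _ hm2
    have he1 : w (Evec n l llen batch a - Evec n l llen batch b) =
        ε a • Av (π a) + (-(ε b)) • Av (π b) := by
      rw [map_sub, hwEv, hwEv, neg_smul, ← sub_eq_add_neg]
    have he2 : w (Evec n l llen batch a + Evec n l llen batch b) =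
        ε a • Av (π a) + (ε b) • Av (π b) := by
      rw [map_add, hwEv, hwEv]
    have main : ∀ (η : ℝ), (η = 1 ∨ η = -1) →
        (ε a • Av (π a) + η • Av (π b)) ∈ R0plus n l llen batch J →
        (π a < π b ∧ ε a = 1) ∨ (π b < π a ∧ η = 1) := by
      intro η hη hmem
      rcases hmem with ⟨c, d, hcd, _, hv | hv⟩ | ⟨c, _, hv⟩
      · have hv' : ε a • Av (π a) + η • Av (π b) = Av c + (-1 : ℝ) • Av d := by
          rw [hv, hEavg, hEavg, neg_one_smul, ← sub_eq_add_neg]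
        rcases classC (L := fun t : Fin r => ((llen (batch t):ℝ))⁻¹) hLpos hIP
          (hε a) hη (Or.inr rfl) hπab (ne_of_lt hcd) hv' with
          ⟨h1, h2, h3, _⟩ | ⟨h1, h2, h3, _⟩
        · left; exact ⟨h1 ▸ h2 ▸ hcd, h3⟩
        · right; exact ⟨h1 ▸ h2 ▸ hcd, h3⟩
      · have hv' : ε a • Av (π a) + η • Av (π b) = Av c + (1 : ℝ) • Av d := by
          rw [hv, hEavg, hEavg, one_smul]
        rcases classC (L := fun t : Fin r => ((llen (batch t):ℝ))⁻¹) hLpos hIP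
          (hε a) hη (Or.inl rfl) hπab (ne_of_lt hcd) hv' with
          ⟨h1, h2, h3, _⟩ | ⟨h1, h2, h3, _⟩
        · left; exact ⟨h1 ▸ h2 ▸ hcd, h3⟩
        · right; exact ⟨h1 ▸ h2 ▸ hcd, h3⟩
      · exfalso
        have hv' : ε a • Av (π a) + η • Av (π b) = Av c := by rw [hv, hEavg]
        exact classD (L := fun t : Fin r => ((llen (batch t):ℝ))⁻¹) hLpos hIP
          (hε a) hη hπab hv'
    have r1 := main (-(ε b)) (by rcases hε b with h | h <;> rw [h] <;> norm_num) (he1 ▸ hw1)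
    have r2 := main (ε b) (hε b) (he2 ▸ hw2)
    rcases r1 with ⟨hlt, hε1⟩ | ⟨hlt, hη⟩
    · exact ⟨hlt, hε1⟩
    · rcases r2 with ⟨hlt2, hε1⟩ | ⟨hlt2, hη2⟩
      · exact ⟨hlt2, hε1⟩
      · exfalso; rw [hη2] at hη; norm_num at hη
  -- π is the identity
  have hπid : ∀ t : Fin r, π t = t := by
    have Hm : ∀ m : ℕ, ∀ t : Fin r, (t : ℕ) < m → π t = t := by
      intro m
      induction m with
      | zero => intro t ht; omega
      | succ m ih =>
        intro t ht
        rcases lt_or_ge (t : ℕ) m with hlt | hge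
        · exact ih t hlt
        · have IH' : ∀ q : Fin r, q < t → π q = q := by
            intro q hq
            exact ih q (by rw [Fin.lt_def] at hq; omega)
          rcases lt_trichotomy (π t) t with hlt' | heq | hgt
          · exfalso
            have h1 : π (π t) = π t := IH' (π t) hlt'
            have h2 := (hkey (π t) t hlt' (hbatchπ t)).1
            rw [h1] at h2
            exact lt_irrefl _ h2
          · exact heq
          · exfalso
            set B := Finset.univ.filter (fun q : Fin r => batch q = batch t) with hB
            have hmapsto : ∀ q ∈ B, π q ∈ B := by
              intro q hq
              simp only [hB, Finset.mem_filter, Finset.mem_univ, true_and] at hq ⊢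
              rw [hbatchπ q, hq]
            have himg : B.image π = B := by
              apply Finset.eq_of_subset_of_card_le
              · intro x hx
                rcases Finset.mem_image.mp hx with ⟨q, hq, rfl⟩
                exact hmapsto q hq
              · rw [Finset.card_image_of_injective _ hπinj]
            have hpB : t ∈ B := by simp [hB]
            obtain ⟨q, hqB, hqp⟩ := Finset.mem_image.mp (himg ▸ hpB)
            have hbq : batch q = batch t := by
              simpa [hB] using hqB
            rcases lt_trichotomy q t with h | h | h
            · have := IH' q h
              rw [this] at hqp
              exact (ne_of_lt h) hqp
            · rw [h] at hqp
              rw [hqp] at hgt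
              exact lt_irrefl _ hgt
            · have h2 := (hkey t q h hbq.symm).1
              rw [hqp] at h2
              exact lt_irrefl _ (h2.trans hgt)
    intro t
    exact Hm r t t.isLt
  -- conclusion
  have hwEp : w (Evec n l llen batch p) = ε p • Av p := by rw [hwEv, hπid]
  constructor
  · rcases hε p with h | h
    · left; rw [hwEp, h, one_smul, hEavg]
    · right; rw [hwEp, h, neg_smul, one_smul, hEavg]
  · intro hcond
    rw [not_and] at hcond
    by_cases hA : ∀ q : Fin r, batch q = batch p → q ≤ p
    · have hpJ : batch p ∉ J := hcond hA
      have hmem : Evec n l llen batch p ∈ R0plus n l llen batch J := Or.inr ⟨p, hpJ, rfl⟩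
      have hwm : w (Evec n l llen batch p) ∈ R0plus n l llen batch J := by
        rw [← hwR]; exact Set.mem_image_of_mem _ hmem
      rw [hwEp] at hwm
      rcases hwm with ⟨c, d, hcd, _, hv | hv⟩ | ⟨c, _, hv⟩
      · exfalso
        have hv' : ε p • Av p = Av c + (-1 : ℝ) • Av d := by
          rw [hv, hEavg, hEavg, neg_one_smul, ← sub_eq_add_neg]
        exact classB (L := fun t : Fin r => ((llen (batch t):ℝ))⁻¹) hLpos hIP
          (hε p) (Or.inr rfl) (ne_of_lt hcd) hv'
      · exfalso
        have hv' : ε p • Av p = Av c + (1 : ℝ) • Av d := by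
          rw [hv, hEavg, hEavg, one_smul]
        exact classB (L := fun t : Fin r => ((llen (batch t):ℝ))⁻¹) hLpos hIP
          (hε p) (Or.inl rfl) (ne_of_lt hcd) hv'
      · have hv' : ε p • Av p = Av c := by rw [hv, hEavg]
        have := (classA (L := fun t : Fin r => ((llen (batch t):ℝ))⁻¹) hLpos hIP
          (hε p) hv').2
        rw [hwEp, this, one_smul, hEavg]
    · push_neg at hA
      obtain ⟨q, hbq, hpq⟩ := hA
      have := (hkey p q hpq hbq.symm).2
      rw [hwEp, this, one_smul, hEavg]

end
end
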